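/- arXiv:2112.09743 — 8 statements merged into one kernel-verified Lean document; each statement's English description precedes it below -/
import Mathlib

section
/- (Determination of finite set from Radon transform) Let S ⊆ ℝ^d be a finite set with at most N points, and let Θ ⊆ S^{d-1} contain (d-1)N + 1 directions such that any d of them are linearly independent. If S' ⊆ ℝ^d satisfies {θ·x : x ∈ S} = {θ·x : x ∈ S'} for all θ ∈ Θ, then S' = S. -/
open scoped RealInnerProductSpace

lemma ortho_zero_of_span {d : ℕ} (T : Finset (EuclideanSpace ℝ (Fin d)))
    (hTcard : T.card = d)
    (hTindep : LinearIndependent ℝ (fun v : T => (v : EuclideanSpace ℝ (Fin d))))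
    (v : EuclideanSpace ℝ (Fin d)) (hv : ∀ θ ∈ T, ⟪θ, v⟫ = 0) : v = 0 := by
  have hspan : Submodule.span ℝ (T : Set (EuclideanSpace ℝ (Fin d))) = ⊤ := by
    have h := hTindep.span_eq_top_of_card_eq_finrank' (by
      simp [Fintype.card_coe, hTcard, finrank_euclideanSpace_fin])
    simpa using h
  have hall : ∀ u ∈ Submodule.span ℝ (T : Set (EuclideanSpace ℝ (Fin d))), (⟪u, v⟫ : ℝ) = 0 := by
    intro u hu
    induction hu using Submodule.span_induction with
    | mem u hu => exact hv u (by simpa using hu)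
    | zero => simp
    | add u w _ _ hu hw => rw [inner_add_left, hu, hw]; ring
    | smul c u _ hu => rw [real_inner_smul_left, hu]; ring
  have : (⟪v, v⟫ : ℝ) = 0 := hall v (hspan ▸ Submodule.mem_top)
  exact inner_self_eq_zero.mp this

lemma aux_mem {d N : ℕ} (A : Set (EuclideanSpace ℝ (Fin d)))
    (hA : A.Finite) (hAcard : A.ncard ≤ N)
    (Θ : Finset (EuclideanSpace ℝ (Fin d)))
    (hΘcard : Θ.card = (d - 1) * N + 1)
    (hΘindep : ∀ T : Finset (EuclideanSpace ℝ (Fin d)), T ⊆ Θ → T.card = d →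
      LinearIndependent ℝ (fun v : T => (v : EuclideanSpace ℝ (Fin d))))
    (x : EuclideanSpace ℝ (Fin d))
    (hx : ∀ θ ∈ Θ, ∃ a ∈ A, (⟪θ, a⟫ : ℝ) = ⟪θ, x⟫) : x ∈ A := by
  by_contra hxA
  have hchoice : ∀ θ ∈ Θ, ∃ a, a ∈ A ∧ (⟪θ, a⟫ : ℝ) = ⟪θ, x⟫ := by
    simpa using hx
  classical
  set f : EuclideanSpace ℝ (Fin d) → EuclideanSpace ℝ (Fin d) :=
    fun θ => if h : θ ∈ Θ then (hchoice θ h).choose else 0 with hf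
  have hfA : ∀ θ ∈ Θ, f θ ∈ hA.toFinset := by
    intro θ hθ
    simp only [hf, dif_pos hθ, Set.Finite.mem_toFinset]
    exact (hchoice θ hθ).choose_spec.1
  have hfeq : ∀ θ ∈ Θ, (⟪θ, f θ⟫ : ℝ) = ⟪θ, x⟫ := by
    intro θ hθ
    simp only [hf, dif_pos hθ]
    exact (hchoice θ hθ).choose_spec.2
  have hlt : hA.toFinset.card * (d - 1) < Θ.card := by
    have : hA.toFinset.card ≤ N := by rwa [Set.ncard_eq_toFinset_card A hA] at hAcard
    calc hA.toFinset.card * (d - 1) ≤ N * (d-1) := Nat.mul_le_mul_right _ this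
    _ = (d-1) * N := Nat.mul_comm _ _
    _ < (d-1) * N + 1 := Nat.lt_succ_self _
    _ = Θ.card := hΘcard.symm
  obtain ⟨a, haA, hfib⟩ := Finset.exists_lt_card_fiber_of_mul_lt_card_of_maps_to hfA hlt
  obtain ⟨T, hTsub, hTcard⟩ := Finset.exists_subset_card_eq (show d ≤ (Θ.filter fun θ => f θ = a).card by omega)
  have hTΘ : T ⊆ Θ := hTsub.trans (Finset.filter_subset _ _)
  have hv : ∀ θ ∈ T, (⟪θ, x - a⟫ : ℝ) = 0 := by
    intro θ hθ
    have h1 := Finset.mem_filter.mp (hTsub hθ)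
    rw [inner_sub_right]
    rw [← h1.2, hfeq θ h1.1]
    ring
  have := ortho_zero_of_span T hTcard (hΘindep T hTΘ hTcard) _ hv
  have : x = a := by rwa [sub_eq_zero] at this
  exact hxA (this ▸ (Set.Finite.mem_toFinset hA).mp haA)

/-- Determination of a finite set from its Radon transform: a set of at most `N`
points in `ℝ^d` is uniquely determined among all subsets of `ℝ^d` by its projections
along `(d-1)N + 1` unit directions, any `d` of which are linearly independent. -/
theorem stmt_8 {d N : ℕ} (S S' : Set (EuclideanSpace ℝ (Fin d)))
    (hS : S.Finite) (hcard : S.ncard ≤ N)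
    (Θ : Finset (EuclideanSpace ℝ (Fin d)))
    (hΘcard : Θ.card = (d - 1) * N + 1)
    (hΘunit : ∀ θ ∈ Θ, ‖θ‖ = 1)
    (hΘindep : ∀ T : Finset (EuclideanSpace ℝ (Fin d)), T ⊆ Θ → T.card = d →
      LinearIndependent ℝ (fun v : T => (v : EuclideanSpace ℝ (Fin d))))
    (hproj : ∀ θ ∈ Θ,
      (fun x => (inner ℝ θ x : ℝ)) '' S = (fun x => (inner ℝ θ x : ℝ)) '' S') :
    S' = S := by
  have hsub : S' ⊆ S := by
    intro x hx
    refine aux_mem S hS hcard Θ hΘcard hΘindep x ?_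
    intro θ hθ
    have : (⟪θ, x⟫ : ℝ) ∈ (fun y => (inner ℝ θ y : ℝ)) '' S := by
      rw [hproj θ hθ]; exact ⟨x, hx, rfl⟩
    obtain ⟨a, haS, ha⟩ := this
    exact ⟨a, haS, ha⟩
  refine Set.Subset.antisymm hsub ?_
  intro s hs
  refine aux_mem S' (hS.subset hsub) (le_trans (Set.ncard_le_ncard hsub hS) hcard) Θ hΘcard hΘindep s ?_
  intro θ hθ
  have : (⟪θ, s⟫ : ℝ) ∈ (fun y => (inner ℝ θ y : ℝ)) '' S' := by
    rw [← hproj θ hθ]; exact ⟨s, hs, rfl⟩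
  obtain ⟨a, haS, ha⟩ := this
  exact ⟨a, haS, ha⟩
end

section
/- (Determination of discrete measure from Radon transform) Let ν be a nonnegative finite Radon measure on ℝ^d supported in at most N points, and let Θ ⊆ S^{d-1} contain (d-1)N + 1 directions such that any d of them are linearly independent. If ν' is any nonnegative finite Radon measure with R_θ ν = R_θ ν' for all θ ∈ Θ (where R_θ is the pushforward under x ↦ θ·x), then ν' = ν. -/
open MeasureTheory

theorem aux_inner_zero {d : ℕ} (T : Finset (EuclideanSpace ℝ (Fin d))) (hd : 0 < d) (hcard : T.card = d)
    (hind : LinearIndependent ℝ (fun v : T => (v : EuclideanSpace ℝ (Fin d))))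
    (v : EuclideanSpace ℝ (Fin d)) (hv : ∀ θ ∈ T, (inner ℝ θ v : ℝ) = 0) : v = 0 := by
  have : Nonempty T := Finset.nonempty_coe_sort.mpr (by rw [← Finset.card_pos, hcard]; exact hd)
  have hspan : Submodule.span ℝ (Set.range (fun v : T => (v : EuclideanSpace ℝ (Fin d)))) = ⊤ :=
    hind.span_eq_top_of_card_eq_finrank (by simp [hcard, finrank_euclideanSpace_fin])
  have hrange : Set.range (fun v : T => (v : EuclideanSpace ℝ (Fin d))) = (T : Set _) := by
    ext x; simp
  rw [hrange] at hspan
  have hker : (T : Set (EuclideanSpace ℝ (Fin d))) ⊆ (LinearMap.ker ((innerSL ℝ v).toLinearMap) : Set _) := by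
    intro θ hθ
    simp only [SetLike.mem_coe, LinearMap.mem_ker, ContinuousLinearMap.coe_coe, innerSL_apply_apply]
    rw [real_inner_comm]; exact hv θ hθ
  have htop := Submodule.span_le.mpr hker
  rw [hspan, top_le_iff] at htop
  have hvv : (inner ℝ v v : ℝ) = 0 := by
    have hm : v ∈ LinearMap.ker ((innerSL ℝ v).toLinearMap) := htop ▸ Submodule.mem_top
    simpa using hm
  exact inner_self_eq_zero.mp hvv

/-- Determination of a discrete nonnegative measure from its Radon transform:
a nonnegative finite Radon measure supported in at most `N` points is uniquely
determined among all nonnegative finite Radon measures by its Radon transforms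
along `(d-1)N + 1` unit directions, any `d` of which are linearly independent. -/
theorem stmt_9 {d N : ℕ} (ν ν' : Measure (EuclideanSpace ℝ (Fin d)))
    [IsFiniteMeasure ν] [IsFiniteMeasure ν']
    (hsupp : ∃ F : Finset (EuclideanSpace ℝ (Fin d)), F.card ≤ N ∧
      ν ((↑F : Set (EuclideanSpace ℝ (Fin d)))ᶜ) = 0)
    (Θ : Finset (EuclideanSpace ℝ (Fin d)))
    (hΘcard : Θ.card = (d - 1) * N + 1)
    (hΘunit : ∀ θ ∈ Θ, ‖θ‖ = 1)
    (hΘindep : ∀ T : Finset (EuclideanSpace ℝ (Fin d)), T ⊆ Θ → T.card = d →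
      LinearIndependent ℝ (fun v : T => (v : EuclideanSpace ℝ (Fin d))))
    (hproj : ∀ θ ∈ Θ,
      ν.map (fun x => (inner ℝ θ x : ℝ)) = ν'.map (fun x => (inner ℝ θ x : ℝ))) :
    ν' = ν := by
  classical
  -- dispose of d = 0
  rcases Nat.eq_zero_or_pos d with hd0 | hd
  · exfalso
    obtain ⟨θ, hθ⟩ : Θ.Nonempty := Finset.card_pos.mp (by rw [hΘcard]; omega)
    have h1 := hΘunit θ hθ
    have h0 : θ = 0 := by
      subst hd0
      exact Subsingleton.elim θ 0
    rw [h0, norm_zero] at h1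
    norm_num at h1
  obtain ⟨F, hFcard, hFnull⟩ := hsupp
  have hmeas : ∀ θ : EuclideanSpace ℝ (Fin d), Measurable fun x : EuclideanSpace ℝ (Fin d) => (inner ℝ θ x : ℝ) := fun θ =>
    (continuous_const.inner continuous_id).measurable
  have hFmeas : MeasurableSet (↑F : Set (EuclideanSpace ℝ (Fin d))) := F.finite_toSet.measurableSet
  -- geometric determination: a point whose projections all hit F's projections is in F
  have hA : ∀ x : EuclideanSpace ℝ (Fin d), (∀ θ ∈ Θ, ∃ y ∈ F, (inner ℝ θ x : ℝ) = inner ℝ θ y) → x ∈ F := by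
    intro x hx
    choose! g hg1 hg2 using hx
    have hmapsto : ∀ θ ∈ Θ, g θ ∈ F := hg1
    have hlt : F.card * (d - 1) < Θ.card := by
      rw [hΘcard]
      calc F.card * (d - 1) ≤ N * (d - 1) := Nat.mul_le_mul_right _ hFcard
        _ = (d - 1) * N := Nat.mul_comm _ _
        _ < (d - 1) * N + 1 := Nat.lt_succ_self _
    obtain ⟨y, hyF, hy⟩ := Finset.exists_lt_card_fiber_of_mul_lt_card_of_maps_to hmapsto hlt
    have hdle : d ≤ (Θ.filter (fun θ => g θ = y)).card := by omega
    obtain ⟨T, hTsub, hTcard⟩ := Finset.exists_subset_card_eq hdle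
    have hTΘ : T ⊆ Θ := hTsub.trans (Finset.filter_subset _ _)
    have hzero : x - y = 0 := by
      refine aux_inner_zero T hd hTcard (hΘindep T hTΘ hTcard) _ ?_
      intro θ hθ
      have hθf := hTsub hθ
      rw [Finset.mem_filter] at hθf
      have := hg2 θ (hθf.1)
      rw [hθf.2] at this
      rw [inner_sub_right, this, sub_self]
    have : x = y := by rwa [sub_eq_zero] at hzero
    rwa [this]
  -- ν' is also concentrated on F
  have hF'null : ν' ((↑F : Set (EuclideanSpace ℝ (Fin d)))ᶜ) = 0 := by
    set A : EuclideanSpace ℝ (Fin d) → Set (EuclideanSpace ℝ (Fin d)) := fun θ => (fun x : EuclideanSpace ℝ (Fin d) => (inner ℝ θ x : ℝ)) ⁻¹'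
        (↑(F.image (fun y => (inner ℝ θ y : ℝ))) : Set ℝ) with hAdef
    have hAnull : ∀ θ ∈ Θ, ν' ((A θ)ᶜ) = 0 := by
      intro θ hθ
      have hms : MeasurableSet ((↑(F.image (fun y => (inner ℝ θ y : ℝ))) : Set ℝ)ᶜ) :=
        (F.image _).finite_toSet.measurableSet.compl
      have h1 : ν' ((A θ)ᶜ) = (ν'.map (fun x : EuclideanSpace ℝ (Fin d) => (inner ℝ θ x : ℝ)))
          ((↑(F.image (fun y => (inner ℝ θ y : ℝ))) : Set ℝ)ᶜ) := by
        rw [Measure.map_apply (hmeas θ) hms]; rfl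
      rw [h1, ← hproj θ hθ, Measure.map_apply (hmeas θ) hms]
      refine measure_mono_null ?_ hFnull
      intro z hz
      simp only [Set.mem_preimage, Set.mem_compl_iff, Finset.coe_image, Set.mem_image,
        Finset.mem_coe] at hz ⊢
      intro hzF
      exact hz ⟨z, hzF, rfl⟩
    have hsub : (⋂ θ ∈ Θ, A θ) ⊆ (↑F : Set (EuclideanSpace ℝ (Fin d))) := by
      intro x hx
      refine hA x ?_
      intro θ hθ
      have := Set.mem_iInter₂.mp hx θ hθ
      simp only [hAdef, Set.mem_preimage, Finset.coe_image, Set.mem_image, Finset.mem_coe] at this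
      obtain ⟨y, hyF, hy⟩ := this
      exact ⟨y, hyF, hy.symm⟩
    refine measure_mono_null (Set.compl_subset_compl.mpr hsub) ?_
    rw [Set.compl_iInter₂]
    exact (measure_biUnion_null_iff Θ.countable_toSet).mpr hAnull
  -- atoms agree
  have hatom : ∀ y ∈ F, ν' {y} = ν {y} := by
    intro y hyF
    -- find a direction separating y from the rest of F
    have hsep : ∃ θ ∈ Θ, ∀ x ∈ F, (inner ℝ θ x : ℝ) = inner ℝ θ y → x = y := by
      set B : Finset (EuclideanSpace ℝ (Fin d)) := (F.erase y).biUnion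
          (fun x => Θ.filter (fun θ => (inner ℝ θ x : ℝ) = inner ℝ θ y)) with hBdef
      have hBcard : B.card < Θ.card := by
        have h1 : B.card ≤ (F.erase y).card * (d - 1) := by
          refine le_trans (Finset.card_biUnion_le) ?_
          rw [← Finset.sum_const_nat (m := d - 1) (fun _ _ => rfl)]
          refine Finset.sum_le_sum ?_
          intro x hx
          by_contra hcon
          push_neg at hcon
          have hdle : d ≤ (Θ.filter (fun θ => (inner ℝ θ x : ℝ) = inner ℝ θ y)).card := by omega
          obtain ⟨T, hTsub, hTcard⟩ := Finset.exists_subset_card_eq hdle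
          have hTΘ : T ⊆ Θ := hTsub.trans (Finset.filter_subset _ _)
          have hz : x - y = 0 := by
            refine aux_inner_zero T hd hTcard (hΘindep T hTΘ hTcard) _ ?_
            intro θ hθ
            have hθf := hTsub hθ
            rw [Finset.mem_filter] at hθf
            rw [inner_sub_right, hθf.2, sub_self]
          rw [sub_eq_zero] at hz
          exact (Finset.mem_erase.mp hx).1 hz
        calc B.card ≤ (F.erase y).card * (d - 1) := h1
          _ ≤ N * (d - 1) := Nat.mul_le_mul_right _
              (le_trans (Finset.card_erase_le) hFcard)
          _ = (d - 1) * N := Nat.mul_comm _ _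
          _ < Θ.card := by rw [hΘcard]; omega
      have hBΘ : B ⊆ Θ := by
        intro θ hθ
        rw [hBdef, Finset.mem_biUnion] at hθ
        obtain ⟨x, _, hx⟩ := hθ
        exact (Finset.mem_filter.mp hx).1
      obtain ⟨θ, hθΘ, hθB⟩ : ∃ θ ∈ Θ, θ ∉ B := by
        by_contra hcon
        push_neg at hcon
        have := Finset.card_le_card hcon
        omega
      refine ⟨θ, hθΘ, ?_⟩
      intro x hxF hxy
      by_contra hne
      refine hθB ?_
      rw [hBdef, Finset.mem_biUnion]
      exact ⟨x, Finset.mem_erase.mpr ⟨hne, hxF⟩, Finset.mem_filter.mpr ⟨hθΘ, hxy⟩⟩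
    obtain ⟨θ, hθΘ, hθsep⟩ := hsep
    set P : Set (EuclideanSpace ℝ (Fin d)) := (fun x : EuclideanSpace ℝ (Fin d) => (inner ℝ θ x : ℝ)) ⁻¹' {(inner ℝ θ y : ℝ)} with hPdef
    have hPmeas : MeasurableSet ({(inner ℝ θ y : ℝ)} : Set ℝ) := measurableSet_singleton _
    have hPeq : ν' P = ν P := by
      have h1 : ν' P = (ν'.map (fun x : EuclideanSpace ℝ (Fin d) => (inner ℝ θ x : ℝ))) {(inner ℝ θ y : ℝ)} := by
        rw [Measure.map_apply (hmeas θ) hPmeas]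
      have h2 : ν P = (ν.map (fun x : EuclideanSpace ℝ (Fin d) => (inner ℝ θ x : ℝ))) {(inner ℝ θ y : ℝ)} := by
        rw [Measure.map_apply (hmeas θ) hPmeas]
      rw [h1, h2, hproj θ hθΘ]
    have key : ∀ (μ : Measure (EuclideanSpace ℝ (Fin d))), μ ((↑F : Set (EuclideanSpace ℝ (Fin d)))ᶜ) = 0 → μ P = μ {y} := by
      intro μ hμ
      refine le_antisymm ?_ (measure_mono ?_)
      · have hPsub : P ⊆ {y} ∪ (↑F : Set (EuclideanSpace ℝ (Fin d)))ᶜ := by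
          intro x hx
          rcases Classical.em (x ∈ F) with hxF | hxF
          · left
            exact hθsep x hxF hx
          · right; exact hxF
        calc μ P ≤ μ ({y} ∪ (↑F : Set (EuclideanSpace ℝ (Fin d)))ᶜ) := measure_mono hPsub
          _ ≤ μ {y} + μ ((↑F : Set (EuclideanSpace ℝ (Fin d)))ᶜ) := measure_union_le _ _
          _ = μ {y} := by rw [hμ, add_zero]
      · intro x hx
        rw [Set.mem_singleton_iff] at hx
        rw [hx]
        exact rfl
    rw [← key ν' hF'null, ← key ν hFnull, hPeq]
  -- conclude
  ext s hs
  have hdecomp : ∀ (μ : Measure (EuclideanSpace ℝ (Fin d))), μ ((↑F : Set (EuclideanSpace ℝ (Fin d)))ᶜ) = 0 → μ s = μ (s ∩ ↑F) := by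
    intro μ hμ
    rw [← measure_inter_add_diff s hFmeas]
    have : μ (s \ ↑F) = 0 := measure_mono_null (fun x hx => hx.2) hμ
    rw [this, add_zero]
  rw [hdecomp ν' hF'null, hdecomp ν hFnull]
  have hunion : s ∩ ↑F = ⋃ y ∈ F.filter (· ∈ s), ({y} : Set (EuclideanSpace ℝ (Fin d))) := by
    ext x
    simp only [Set.mem_inter_iff, Set.mem_iUnion, Finset.mem_filter, Set.mem_singleton_iff,
      Finset.mem_coe]
    constructor
    · rintro ⟨hxs, hxF⟩; exact ⟨x, ⟨hxF, hxs⟩, rfl⟩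
    · rintro ⟨y, ⟨hyF, hys⟩, rfl⟩; exact ⟨hys, hyF⟩
  have hdisj : (↑(F.filter (· ∈ s)) : Set (EuclideanSpace ℝ (Fin d))).PairwiseDisjoint (fun y => ({y} : Set (EuclideanSpace ℝ (Fin d)))) := by
    intro a _ b _ hab
    simp [Set.disjoint_singleton, hab]
  have hm : ∀ y ∈ F.filter (· ∈ s), MeasurableSet ({y} : Set (EuclideanSpace ℝ (Fin d))) :=
    fun y _ => measurableSet_singleton y
  rw [hunion, measure_biUnion_finset hdisj hm, measure_biUnion_finset hdisj hm]
  refine Finset.sum_congr rfl ?_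
  intro y hy
  exact hatom y (Finset.mem_filter.mp hy).1
end

section
/- (Generic determination of a point set by d+1 projections) Let Θ ⊆ S^{d-1} contain d+1 directions such that any d of them are linearly independent, and consider a probability distribution on N-tuples of points in ℝ^d that is absolutely continuous with respect to dN-dimensional Lebesgue measure. Then almost surely a sampled set S of N points is uniquely determined among all subsets of ℝ^d by the projections {θ·x : x ∈ S} for θ ∈ Θ. -/
open MeasureTheory

section Aux
open Finset
variable {d N : ℕ}



/-- Any vanishing linear combination over `Θ` with at least one zero coefficient is trivial. -/
lemma aux_comb (Θ : Finset (EuclideanSpace ℝ (Fin d)))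
    (hΘcard : Θ.card = d + 1)
    (hΘindep : ∀ T : Finset (EuclideanSpace ℝ (Fin d)), T ⊆ Θ → T.card = d →
      LinearIndependent ℝ (fun v : T => (v : EuclideanSpace ℝ (Fin d))))
    {g : EuclideanSpace ℝ (Fin d) → ℝ} {θ₀ : EuclideanSpace ℝ (Fin d)}
    (hθ₀ : θ₀ ∈ Θ) (hg0 : g θ₀ = 0)
    (hsum : ∑ w ∈ Θ, g w • w = 0) : ∀ w ∈ Θ, g w = 0 := by
  classical
  set U := Θ.erase θ₀ with hU
  have hUcard : U.card = d := by
    rw [hU, Finset.card_erase_of_mem hθ₀, hΘcard]; rfl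
  have li := hΘindep U (Finset.erase_subset _ _) hUcard
  have hsumU : ∑ w ∈ U, g w • w = 0 := by
    rw [Finset.sum_erase Θ (by rw [hg0, zero_smul])]
    exact hsum
  have h2 := Fintype.linearIndependent_iff.mp li (fun v => g ↑v) ?hz
  case hz =>
    rw [Finset.sum_coe_sort U (fun w => g w • w)]
    exact hsumU
  intro w hw
  by_cases hwθ : w = θ₀
  · rw [hwθ]; exact hg0
  · exact h2 ⟨w, Finset.mem_erase.mpr ⟨hwθ, hw⟩⟩

/-- The kernel of a nonzero linear functional is Lebesgue-null. -/
lemma aux_ker_null (L : (Fin N → EuclideanSpace ℝ (Fin d)) →ₗ[ℝ] ℝ) (hL : L ≠ 0) :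
    (volume : Measure (Fin N → EuclideanSpace ℝ (Fin d))) {x | L x = 0} = 0 := by
  haveI : Measure.IsAddHaarMeasure
      (volume : Measure (Fin N → EuclideanSpace ℝ (Fin d))) :=
    Measure.pi.isAddHaarMeasure _
  have : ({x | L x = 0} : Set (Fin N → EuclideanSpace ℝ (Fin d)))
      = (LinearMap.ker L : Set (Fin N → EuclideanSpace ℝ (Fin d))) := by
    ext x; simp [LinearMap.mem_ker]
  rw [this]
  exact Measure.addHaar_submodule _ _ (by simpa [LinearMap.ker_eq_top] using hL)


lemma keyA (θ : EuclideanSpace ℝ (Fin d)) (hθ : ‖θ‖ = 1) (i j : Fin N) (hij : i ≠ j) :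
    (volume : Measure (Fin N → EuclideanSpace ℝ (Fin d)))
      {x | (inner ℝ θ (x i) : ℝ) = inner ℝ θ (x j)} = 0 := by
  classical
  set L : (Fin N → EuclideanSpace ℝ (Fin d)) →ₗ[ℝ] ℝ :=
    (innerSL ℝ θ).toLinearMap.comp (LinearMap.proj i)
      - (innerSL ℝ θ).toLinearMap.comp (LinearMap.proj j) with hL
  have hLapply : ∀ x : Fin N → EuclideanSpace ℝ (Fin d),
      L x = (inner ℝ θ (x i) : ℝ) - inner ℝ θ (x j) := by
    intro x; simp [hL]
  have hLne : L ≠ 0 := by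
    intro h0
    have h1 : L (fun k => if k = i then θ else 0) = 0 := by rw [h0]; rfl
    rw [hLapply] at h1
    simp only [if_true, if_neg (Ne.symm hij), inner_zero_right, sub_zero] at h1
    rw [real_inner_self_eq_norm_sq, hθ] at h1
    norm_num at h1
  have hsub : ({x | (inner ℝ θ (x i) : ℝ) = inner ℝ θ (x j)} :
      Set (Fin N → EuclideanSpace ℝ (Fin d))) ⊆ {x | L x = 0} := by
    intro x hx; simp only [Set.mem_setOf_eq] at hx ⊢; rw [hLapply, hx, sub_self]
  exact measure_mono_null hsub (aux_ker_null L hLne)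


lemma keyB (Θ : Finset (EuclideanSpace ℝ (Fin d)))
    (hΘcard : Θ.card = d + 1)
    (hΘindep : ∀ T : Finset (EuclideanSpace ℝ (Fin d)), T ⊆ Θ → T.card = d →
      LinearIndependent ℝ (fun v : T => (v : EuclideanSpace ℝ (Fin d))))
    (ι : Θ → Fin N) (a b : Θ) (hab : ι a ≠ ι b) :
    (volume : Measure (Fin N → EuclideanSpace ℝ (Fin d)))
      {x | ∃ y, ∀ θ : Θ, (inner ℝ (θ : EuclideanSpace ℝ (Fin d)) y : ℝ)
            = inner ℝ (θ : EuclideanSpace ℝ (Fin d)) (x (ι θ))} = 0 := by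
  classical
  have hne : (b : EuclideanSpace ℝ (Fin d)) ≠ (a : EuclideanSpace ℝ (Fin d)) :=
    fun h => hab (congrArg ι (Subtype.ext h.symm))
  set T : Finset (EuclideanSpace ℝ (Fin d)) := Θ.erase ↑a with hT
  have hθ₂T : (b : EuclideanSpace ℝ (Fin d)) ∈ T := Finset.mem_erase.mpr ⟨hne, b.2⟩
  have hTcard : T.card = d := by
    rw [hT, Finset.card_erase_of_mem a.2, hΘcard]; rfl
  have liT := hΘindep T (Finset.erase_subset _ _) hTcard
  haveI : Nonempty { x // x ∈ T } := ⟨⟨↑b, hθ₂T⟩⟩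
  set bT : Module.Basis T ℝ (EuclideanSpace ℝ (Fin d)) :=
    basisOfLinearIndependentOfCardEqFinrank liT
      (by simp [hTcard, finrank_euclideanSpace_fin, Fintype.card_coe]) with hbT
  set c : EuclideanSpace ℝ (Fin d) → ℝ :=
    fun w => if h : w ∈ T then bT.repr ↑a ⟨w, h⟩ else 0 with hc
  have hrepr : ∑ w ∈ T, c w • w = (a : EuclideanSpace ℝ (Fin d)) := by
    rw [← Finset.sum_coe_sort T (fun w => c w • w)]
    have hsr := bT.sum_repr ↑a
    rw [← hsr]
    refine Finset.sum_congr rfl fun i _ => ?_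
    have hcoe : bT i = ↑i := by
      rw [hbT, coe_basisOfLinearIndependentOfCardEqFinrank]
    rw [hcoe, hc]
    simp [i.2]
  have hcθ₂ : c ↑b ≠ 0 := by
    intro h0
    set g : EuclideanSpace ℝ (Fin d) → ℝ := fun w => if w = ↑a then -1 else c w with hg
    have hgsum : ∑ w ∈ Θ, g w • w = 0 := by
      rw [← Finset.add_sum_erase Θ _ a.2, ← hT]
      have h2 : ∑ w ∈ T, g w • w = ∑ w ∈ T, c w • w :=
        Finset.sum_congr rfl fun w hw => by
          have hwT : w ∈ Θ.erase ↑a := by rw [← hT]; exact hw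
          rw [hg]; simp only [if_neg (Finset.ne_of_mem_erase hwT)]
      rw [h2, hrepr, hg]
      simp
    have hfin := aux_comb Θ hΘcard hΘindep (θ₀ := ↑b) b.2
      (by rw [hg]; simp [hne, h0]) hgsum ↑a a.2
    rw [hg] at hfin; simp at hfin
  -- the linear functional
  set ι' : { x // x ∈ T } → Fin N :=
    fun w => ι ⟨↑w, Finset.mem_of_mem_erase (show (↑w : EuclideanSpace ℝ (Fin d)) ∈ Θ.erase ↑a from hT ▸ w.2)⟩ with hι'
  set L : (Fin N → EuclideanSpace ℝ (Fin d)) →ₗ[ℝ] ℝ :=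
    (∑ w : { x // x ∈ T },
      c ↑w • ((innerSL ℝ (↑w : EuclideanSpace ℝ (Fin d))).toLinearMap.comp
        (LinearMap.proj (ι' w))))
      - (innerSL ℝ (↑a : EuclideanSpace ℝ (Fin d))).toLinearMap.comp (LinearMap.proj (ι a))
    with hL
  have hLapply : ∀ x : Fin N → EuclideanSpace ℝ (Fin d),
      L x = (∑ w : { x // x ∈ T },
          c ↑w * (inner ℝ (↑w : EuclideanSpace ℝ (Fin d)) (x (ι' w)) : ℝ))
        - (inner ℝ (↑a : EuclideanSpace ℝ (Fin d)) (x (ι a)) : ℝ) := by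
    intro x
    rw [hL]
    simp [LinearMap.sum_apply, LinearMap.smul_apply, smul_eq_mul]
  have hmem : ∀ x ∈ ({x | ∃ y, ∀ θ : Θ, (inner ℝ (θ : EuclideanSpace ℝ (Fin d)) y : ℝ)
            = inner ℝ (θ : EuclideanSpace ℝ (Fin d)) (x (ι θ))} :
        Set (Fin N → EuclideanSpace ℝ (Fin d))), L x = 0 := by
    rintro x ⟨y, hy⟩
    rw [hLapply]
    have hterm : ∀ w : { x // x ∈ T },
        (inner ℝ (↑w : EuclideanSpace ℝ (Fin d)) (x (ι' w)) : ℝ)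
          = inner ℝ (↑w : EuclideanSpace ℝ (Fin d)) y := by
      intro w
      simp only [hι']
      exact (hy ⟨↑w, Finset.mem_of_mem_erase (show (↑w : EuclideanSpace ℝ (Fin d)) ∈ Θ.erase ↑a from hT ▸ w.2)⟩).symm
    have hsum : ∑ w : { x // x ∈ T },
        c ↑w * (inner ℝ (↑w : EuclideanSpace ℝ (Fin d)) (x (ι' w)) : ℝ)
        = (inner ℝ (↑a : EuclideanSpace ℝ (Fin d)) y : ℝ) := by
      have h1 := congrArg (fun v : EuclideanSpace ℝ (Fin d) => (inner ℝ v y : ℝ)) hrepr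
      rw [sum_inner] at h1
      simp only [real_inner_smul_left] at h1
      rw [← Finset.sum_coe_sort T
        (fun w => c w * (inner ℝ w y : ℝ))] at h1
      rw [← h1]
      exact Finset.sum_congr rfl fun w _ => by rw [hterm w]
    rw [hsum, hy a, sub_self]
  have hLne : L ≠ 0 := by
    intro h0
    set k : EuclideanSpace ℝ (Fin d) → ℝ := fun w =>
      if h : w ∈ T then
        (if ι ⟨w, Finset.mem_of_mem_erase (show w ∈ Θ.erase ↑a from hT ▸ h)⟩ = ι b
          then c w else 0)
      else 0 with hk
    set v : EuclideanSpace ℝ (Fin d) := ∑ w ∈ T, k w • w with hv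
    have hkθ₁ : k ↑a = 0 := by
      rw [hk]; simp [Finset.notMem_erase, hT]
    have hkθ₂ : k ↑b = c ↑b := by
      rw [hk]
      have : (⟨↑b, Finset.mem_of_mem_erase (show (↑b : EuclideanSpace ℝ (Fin d)) ∈ Θ.erase ↑a from hT ▸ hθ₂T)⟩ : Θ) = b := Subtype.ext rfl
      simp [hθ₂T, this]
    have hvne : v ≠ 0 := by
      intro hv0
      have hksum : ∑ w ∈ Θ, k w • w = 0 := by
        rw [← Finset.add_sum_erase Θ _ a.2, ← hT, hkθ₁, zero_smul, zero_add, ← hv]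
        exact hv0
      have := aux_comb Θ hΘcard hΘindep (θ₀ := ↑a) a.2 hkθ₁ hksum ↑b b.2
      rw [hkθ₂] at this
      exact hcθ₂ this
    set x₀ : Fin N → EuclideanSpace ℝ (Fin d) := fun j => if j = ι b then v else 0 with hx₀
    have hLx₀ : L x₀ = 0 := by rw [h0]; rfl
    rw [hLapply] at hLx₀
    have hx₀a : x₀ (ι a) = 0 := by rw [hx₀]; simp [hab]
    have hmain : ∑ w : { x // x ∈ T },
        c ↑w * (inner ℝ (↑w : EuclideanSpace ℝ (Fin d)) (x₀ (ι' w)) : ℝ)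
        = (inner ℝ v v : ℝ) := by
      have h1 : (inner ℝ v v : ℝ) = ∑ w ∈ T, k w * (inner ℝ w v : ℝ) := by
        nth_rewrite 1 [hv]
        rw [sum_inner]
        exact Finset.sum_congr rfl fun w _ => real_inner_smul_left _ _ _
      rw [h1, ← Finset.sum_coe_sort T (fun w => k w * (inner ℝ w v : ℝ))]
      refine Finset.sum_congr rfl fun w _ => ?_
      have hkw : k ↑w = if ι' w = ι b then c ↑w else 0 := by
        rw [hk, hι']; simp [w.2]
      rw [hkw, hx₀]
      by_cases hwb : ι' w = ι b
      · simp [hwb]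
      · simp [hwb]
    rw [hmain, hx₀a, inner_zero_right, sub_zero] at hLx₀
    exact hvne (inner_self_eq_zero.mp hLx₀)
  exact measure_mono_null hmem (aux_ker_null L hLne)

end Aux

/-- Generic determination of a set of `N` points by `d+1` projections: for a
distribution of `N`-tuples of points absolutely continuous with respect to Lebesgue
measure, almost surely the sampled point set is uniquely determined among all
subsets of `ℝ^d` by its projections along the directions in `Θ`. -/
theorem stmt_10 {d N : ℕ}
    (Θ : Finset (EuclideanSpace ℝ (Fin d)))
    (hΘcard : Θ.card = d + 1)
    (hΘunit : ∀ θ ∈ Θ, ‖θ‖ = 1)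
    (hΘindep : ∀ T : Finset (EuclideanSpace ℝ (Fin d)), T ⊆ Θ → T.card = d →
      LinearIndependent ℝ (fun v : T => (v : EuclideanSpace ℝ (Fin d))))
    (P : Measure (Fin N → EuclideanSpace ℝ (Fin d))) [IsProbabilityMeasure P]
    (hac : P ≪ MeasureTheory.volume) :
    ∀ᵐ x ∂P, ∀ S' : Set (EuclideanSpace ℝ (Fin d)),
      (∀ θ ∈ Θ, (fun y => (inner ℝ θ y : ℝ)) '' S'
          = (fun y => (inner ℝ θ y : ℝ)) '' Set.range x) →
      S' = Set.range x := by
  classical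
  have hΘne : Θ.Nonempty := Finset.card_pos.mp (by rw [hΘcard]; omega)
  obtain ⟨θfix, hθfix⟩ := hΘne
  have hA : ∀ᵐ x ∂P, ∀ θ : Θ, ∀ i : Fin N, ∀ j : Fin N, i ≠ j →
      (inner ℝ (θ : EuclideanSpace ℝ (Fin d)) (x i) : ℝ)
        ≠ inner ℝ (θ : EuclideanSpace ℝ (Fin d)) (x j) := by
    rw [ae_all_iff]; intro θ
    rw [ae_all_iff]; intro i
    rw [ae_all_iff]; intro j
    by_cases hij : i = j
    · exact ae_of_all _ fun x h => absurd hij h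
    · have h0 := hac (keyA (θ : EuclideanSpace ℝ (Fin d)) (hΘunit ↑θ θ.2) i j hij)
      have h1 : ∀ᵐ x ∂P, (inner ℝ (θ : EuclideanSpace ℝ (Fin d)) (x i) : ℝ)
          ≠ inner ℝ (θ : EuclideanSpace ℝ (Fin d)) (x j) := by
        rw [ae_iff]
        simp only [ne_eq, not_not]
        exact h0
      exact h1.mono fun x h _ => h
  have hB : ∀ᵐ x ∂P, ∀ ι : Θ → Fin N, (∃ a b : Θ, ι a ≠ ι b) →
      ¬∃ y, ∀ θ : Θ, (inner ℝ (θ : EuclideanSpace ℝ (Fin d)) y : ℝ)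
        = inner ℝ (θ : EuclideanSpace ℝ (Fin d)) (x (ι θ)) := by
    rw [ae_all_iff]; intro ι
    by_cases hnc : ∃ a b : Θ, ι a ≠ ι b
    · obtain ⟨a, b, hab⟩ := hnc
      have h0 := hac (keyB Θ hΘcard hΘindep ι a b hab)
      have h1 : ∀ᵐ x ∂P, ¬∃ y, ∀ θ : Θ, (inner ℝ (θ : EuclideanSpace ℝ (Fin d)) y : ℝ)
          = inner ℝ (θ : EuclideanSpace ℝ (Fin d)) (x (ι θ)) := by
        rw [ae_iff]
        simp only [not_not]
        exact h0
      exact h1.mono fun x h _ => h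
    · exact ae_of_all _ fun x h => absurd h hnc
  filter_upwards [hA, hB] with x hAx hBx
  intro S' hproj
  have hsub : S' ⊆ Set.range x := by
    intro y hy
    have hex : ∀ θ : Θ, ∃ i : Fin N, (inner ℝ (θ : EuclideanSpace ℝ (Fin d)) y : ℝ)
        = inner ℝ (θ : EuclideanSpace ℝ (Fin d)) (x i) := by
      intro θ
      have hmem : (inner ℝ (θ : EuclideanSpace ℝ (Fin d)) y : ℝ)
          ∈ (fun z => (inner ℝ (θ : EuclideanSpace ℝ (Fin d)) z : ℝ)) '' Set.range x := by
        rw [← hproj ↑θ θ.2]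
        exact ⟨y, hy, rfl⟩
      obtain ⟨z, ⟨i, rfl⟩, hz⟩ := hmem
      exact ⟨i, hz.symm⟩
    choose ι hι using hex
    by_cases hnc : ∃ a b : Θ, ι a ≠ ι b
    · exact absurd ⟨y, fun θ => hι θ⟩ (hBx ι hnc)
    · push_neg at hnc
      refine ⟨ι ⟨θfix, hθfix⟩, ?_⟩
      have horto : ∀ w ∈ Θ, (inner ℝ w (y - x (ι ⟨θfix, hθfix⟩)) : ℝ) = 0 := by
        intro w hw
        have h1 := hι ⟨w, hw⟩
        rw [hnc ⟨w, hw⟩ ⟨θfix, hθfix⟩] at h1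
        rw [inner_sub_right, ← h1, sub_self]
      set z : EuclideanSpace ℝ (Fin d) := y - x (ι ⟨θfix, hθfix⟩) with hzdef
      have li := hΘindep (Θ.erase θfix) (Finset.erase_subset _ _)
        (by rw [Finset.card_erase_of_mem hθfix, hΘcard]; rfl)
      have hspan : Submodule.span ℝ
          (Set.range (fun v : (Θ.erase θfix) => (v : EuclideanSpace ℝ (Fin d)))) = ⊤ :=
        li.span_eq_top_of_card_eq_finrank'
          (by simp [Fintype.card_coe, Finset.card_erase_of_mem hθfix, hΘcard,
            finrank_euclideanSpace_fin])
      have hker : Submodule.span ℝ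
          (Set.range (fun v : (Θ.erase θfix) => (v : EuclideanSpace ℝ (Fin d))))
          ≤ LinearMap.ker ((innerSL ℝ z).toLinearMap) := by
        rw [Submodule.span_le]
        rintro w ⟨v, rfl⟩
        simp only [SetLike.mem_coe, LinearMap.mem_ker, ContinuousLinearMap.coe_coe,
          innerSL_apply_apply]
        rw [real_inner_comm]
        exact horto ↑v (Finset.mem_of_mem_erase v.2)
      rw [hspan] at hker
      have hzz : (inner ℝ z z : ℝ) = 0 := hker Submodule.mem_top
      have hz0 : z = 0 := inner_self_eq_zero.mp hzz
      have : y = x (ι ⟨θfix, hθfix⟩) := by rwa [hzdef, sub_eq_zero] at hz0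
      exact this.symm
  have hsup : Set.range x ⊆ S' := by
    rintro _ ⟨i, rfl⟩
    have hmem : (inner ℝ θfix (x i) : ℝ) ∈ (fun z => (inner ℝ θfix z : ℝ)) '' S' := by
      rw [hproj θfix hθfix]
      exact ⟨x i, ⟨i, rfl⟩, rfl⟩
    obtain ⟨y, hyS, hyeq⟩ := hmem
    obtain ⟨j, rfl⟩ := hsub hyS
    by_cases hij : j = i
    · rw [← hij]; exact hyS
    · exact absurd hyeq (hAx ⟨θfix, hθfix⟩ j i hij)
  exact Set.Subset.antisymm hsub hsup
end

section
/- (Exact reconstruction transfers to position-velocity projections, key inequality) Let γ†_θ = Σ_{i=1}^N m_i δ_{(θ·x_i, θ·v_i)} with m_i > 0, let ξ = ξ_a + ξ_s be a signed measure on ℝ² with ξ_a = Σ_i β_i δ_{(θ·x_i,θ·v_i)} and ξ_s ⊥ γ†_θ, and suppose there exists a function q : ℝ² → [−1,1] with q(θ·x_i, θ·v_i) = sgn β_i for all i, |q| < 1 outside supp γ†_θ, and ∫ q dξ = 0. If ξ_s ≠ 0 then ‖γ†_θ + ξ‖_M > ‖γ†_θ‖_M; consequently, any minimizer of the total variation norm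 among measures γ†_θ + ξ satisfying these constraints has ξ_s = 0 and ξ_a = 0. -/
open MeasureTheory

/-- Integral of a function against a finite signed measure, via the Jordan decomposition. -/
noncomputable def signedIntegral {α : Type*} [MeasurableSpace α]
    (f : α → ℝ) (s : SignedMeasure α) : ℝ :=
  ∫ x, f x ∂s.toJordanDecomposition.posPart - ∫ x, f x ∂s.toJordanDecomposition.negPart

open scoped ENNReal NNReal

variable {α : Type*} [MeasurableSpace α]

lemma integrable_of_abs_le_one (μ : Measure α) [IsFiniteMeasure μ]
    {f : α → ℝ} (hf : Measurable f) (h1 : ∀ x, |f x| ≤ 1) : Integrable f μ := by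
  refine Integrable.mono' (integrable_const 1) hf.aestronglyMeasurable ?_
  filter_upwards with x; simpa using h1 x

lemma jordan_add_eq (μ ν : Measure α) [IsFiniteMeasure μ] [IsFiniteMeasure ν]
    (s : SignedMeasure α) (h : s = μ.toSignedMeasure - ν.toSignedMeasure) :
    μ + s.toJordanDecomposition.negPart = ν + s.toJordanDecomposition.posPart := by
  have h2 : s.toJordanDecomposition.posPart.toSignedMeasure
      - s.toJordanDecomposition.negPart.toSignedMeasure = μ.toSignedMeasure - ν.toSignedMeasure := by
    rw [← h]
    exact s.toSignedMeasure_toJordanDecomposition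
  ext A hA
  have h3 : (s.toJordanDecomposition.posPart.toSignedMeasure
      - s.toJordanDecomposition.negPart.toSignedMeasure) A
      = (μ.toSignedMeasure - ν.toSignedMeasure) A := by rw [h2]
  simp only [VectorMeasure.coe_sub, Pi.sub_apply,
    Measure.toSignedMeasure_apply_measurable hA, measureReal_def] at h3
  rw [Measure.add_apply, Measure.add_apply]
  have e1 : μ A ≠ ⊤ := measure_ne_top _ _
  have e2 : ν A ≠ ⊤ := measure_ne_top _ _
  have e3 : s.toJordanDecomposition.posPart A ≠ ⊤ := measure_ne_top _ _
  have e4 : s.toJordanDecomposition.negPart A ≠ ⊤ := measure_ne_top _ _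
  rw [← ENNReal.toReal_eq_toReal_iff' (by finiteness) (by finiteness),
    ENNReal.toReal_add e1 e4, ENNReal.toReal_add e2 e3]
  linarith

lemma signedIntegral_eq (μ ν : Measure α) [IsFiniteMeasure μ] [IsFiniteMeasure ν]
    (s : SignedMeasure α) (h : s = μ.toSignedMeasure - ν.toSignedMeasure)
    {f : α → ℝ} (hf : Measurable f) (h1 : ∀ x, |f x| ≤ 1) :
    signedIntegral f s = ∫ x, f x ∂μ - ∫ x, f x ∂ν := by
  have hme := jordan_add_eq μ ν s h
  have hi : ∫ x, f x ∂(μ + s.toJordanDecomposition.negPart)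
      = ∫ x, f x ∂(ν + s.toJordanDecomposition.posPart) := by rw [hme]
  rw [integral_add_measure (integrable_of_abs_le_one _ hf h1) (integrable_of_abs_le_one _ hf h1),
    integral_add_measure (integrable_of_abs_le_one _ hf h1) (integrable_of_abs_le_one _ hf h1)] at hi
  unfold signedIntegral
  linarith

lemma signedIntegral_le_tv (s : SignedMeasure α) {f : α → ℝ} (hf : Measurable f)
    (h1 : ∀ x, |f x| ≤ 1) :
    signedIntegral f s ≤ (s.totalVariation Set.univ).toReal := by
  have hp : ∫ x, f x ∂s.toJordanDecomposition.posPart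
      ≤ (s.toJordanDecomposition.posPart Set.univ).toReal := by
    calc ∫ x, f x ∂s.toJordanDecomposition.posPart
        ≤ ∫ _, (1:ℝ) ∂s.toJordanDecomposition.posPart :=
          integral_mono (integrable_of_abs_le_one _ hf h1) (integrable_const 1)
            (fun x => (abs_le.1 (h1 x)).2)
      _ = (s.toJordanDecomposition.posPart Set.univ).toReal := by simp [measureReal_def]
  have hn : -(s.toJordanDecomposition.negPart Set.univ).toReal
      ≤ ∫ x, f x ∂s.toJordanDecomposition.negPart := by
    have : ∫ _, (-1:ℝ) ∂s.toJordanDecomposition.negPart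
        ≤ ∫ x, f x ∂s.toJordanDecomposition.negPart :=
      integral_mono (integrable_const (-1)) (integrable_of_abs_le_one _ hf h1)
        (fun x => (abs_le.1 (h1 x)).1)
    simpa [measureReal_def] using this
  have htv : (s.totalVariation Set.univ).toReal
      = (s.toJordanDecomposition.posPart Set.univ).toReal
        + (s.toJordanDecomposition.negPart Set.univ).toReal := by
    rw [SignedMeasure.totalVariation, Measure.add_apply,
      ENNReal.toReal_add (measure_ne_top _ _) (measure_ne_top _ _)]
  unfold signedIntegral
  linarith

lemma toSignedMeasure_finset_sum {ι : Type*} (t : Finset ι) (μ : ι → Measure α)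
    [∀ i, IsFiniteMeasure (μ i)] :
    (∑ i ∈ t, μ i).toSignedMeasure = ∑ i ∈ t, (μ i).toSignedMeasure := by
  classical
  induction t using Finset.cons_induction with
  | empty => simp
  | cons a t ha ih =>
    rw [Measure.toSignedMeasure_congr (Finset.sum_cons ha), Finset.sum_cons,
      Measure.toSignedMeasure_add, ih]

lemma totalVariation_toSignedMeasure (μ : Measure α) [IsFiniteMeasure μ] :
    μ.toSignedMeasure.totalVariation = μ := by
  have h : μ.toSignedMeasure.toJordanDecomposition
      = { posPart := μ, negPart := 0, posPart_finite := inferInstance,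
          negPart_finite := inferInstance,
          mutuallySingular := Measure.MutuallySingular.zero_right } := by
    apply SignedMeasure.toJordanDecomposition_eq
    show μ.toSignedMeasure = JordanDecomposition.toSignedMeasure _
    rw [JordanDecomposition.toSignedMeasure]
    simp
  rw [SignedMeasure.totalVariation, h]
  simp

lemma integral_sum_smul_dirac [MeasurableSingletonClass α] {N : ℕ}
    (p : Fin N → α) (c : Fin N → NNReal) {f : α → ℝ} (hf : Measurable f) (h1 : ∀ x, |f x| ≤ 1) :
    ∫ x, f x ∂(∑ i, (c i) • Measure.dirac (p i)) = ∑ i, (c i : ℝ) * f (p i) := by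
  rw [integral_finset_sum_measure (fun i _ => integrable_of_abs_le_one _ hf h1)]
  refine Finset.sum_congr rfl fun i _ => ?_
  rw [integral_smul_nnreal_measure, integral_dirac]
  simp [NNReal.smul_def]

lemma real_mul_sign (x : ℝ) : x * Real.sign x = |x| := by
  rcases lt_trichotomy x 0 with h | h | h
  · rw [Real.sign_of_neg h, abs_of_neg h]; ring
  · simp [h]
  · rw [Real.sign_of_pos h, abs_of_pos h]; ring

lemma max_sub_max_neg (b : ℝ) : ((b.toNNReal : ℝ)) - (((-b).toNNReal : ℝ)) = b := by
  rw [Real.coe_toNNReal', Real.coe_toNNReal', max_zero_sub_max_neg_zero_eq_self]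

/-- Key inequality for exact reconstruction of position-velocity projections:
if a dual certificate `q` exists for `γ† = Σ m_i δ_{p_i}` and the error
`ξ = ξ_a + ξ_s` (atomic part on the support plus a singular part) satisfies
`∫ q dξ = 0`, then `ξ_s ≠ 0` implies `‖γ† + ξ‖_M > ‖γ†‖_M`; consequently any
total-variation minimizer has `ξ_a = 0` and `ξ_s = 0`. -/
theorem stmt_14 {N : ℕ} (p : Fin N → ℝ × ℝ) (hp : Function.Injective p)
    (m β : Fin N → ℝ) (hm : ∀ i, 0 < m i)
    (γdag ξa : SignedMeasure (ℝ × ℝ))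
    (hγ : γdag = ∑ i, m i • (Measure.dirac (p i)).toSignedMeasure)
    (hξa : ξa = ∑ i, β i • (Measure.dirac (p i)).toSignedMeasure)
    (ξs : SignedMeasure (ℝ × ℝ))
    (hsing : (SignedMeasure.totalVariation ξs).MutuallySingular
      (SignedMeasure.totalVariation γdag))
    (q : ℝ × ℝ → ℝ) (hq : Measurable q)
    (hq1 : ∀ z, |q z| ≤ 1)
    (hqsign : ∀ i, q (p i) = Real.sign (β i))
    (hqlt : ∀ z, z ∉ Set.range p → |q z| < 1)
    (hint : signedIntegral q (ξa + ξs) = 0) :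
    (ξs ≠ 0 →
      (SignedMeasure.totalVariation γdag Set.univ).toReal
        < (SignedMeasure.totalVariation (γdag + (ξa + ξs)) Set.univ).toReal)
    ∧ ((SignedMeasure.totalVariation (γdag + (ξa + ξs)) Set.univ).toReal
          ≤ (SignedMeasure.totalVariation γdag Set.univ).toReal →
        ξa = 0 ∧ ξs = 0) := by
  classical
  obtain ⟨pos, neg, hfinpos, hfinneg, hξs, hIqs, hμtr, B, hBm, hB1, hB2⟩ :
      ∃ (pos neg : Measure (ℝ × ℝ)) (_ : IsFiniteMeasure pos) (_ : IsFiniteMeasure neg),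
        ξs = pos.toSignedMeasure - neg.toSignedMeasure ∧
        signedIntegral q ξs = (∫ z, q z ∂pos) - ∫ z, q z ∂neg ∧
        ξs.totalVariation = pos + neg ∧
        ∃ B, MeasurableSet B ∧ pos B = 0 ∧ neg Bᶜ = 0 :=
    ⟨ξs.toJordanDecomposition.posPart, ξs.toJordanDecomposition.negPart,
      inferInstance, inferInstance, (ξs.toSignedMeasure_toJordanDecomposition).symm, rfl, rfl,
      ξs.toJordanDecomposition.mutuallySingular⟩
  -- signed measure decompositions
  have hγm : γdag = (∑ i, (m i).toNNReal • Measure.dirac (p i)).toSignedMeasure := by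
    rw [hγ, toSignedMeasure_finset_sum]
    refine Finset.sum_congr rfl fun i _ => ?_
    rw [Measure.toSignedMeasure_smul, NNReal.smul_def, Real.coe_toNNReal _ (hm i).le]
  have hξam : ξa = (∑ i, (β i).toNNReal • Measure.dirac (p i)).toSignedMeasure
      - (∑ i, (-(β i)).toNNReal • Measure.dirac (p i)).toSignedMeasure := by
    rw [hξa, toSignedMeasure_finset_sum, toSignedMeasure_finset_sum,
      ← Finset.sum_sub_distrib]
    refine Finset.sum_congr rfl fun i _ => ?_
    rw [Measure.toSignedMeasure_smul, Measure.toSignedMeasure_smul, NNReal.smul_def,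
      NNReal.smul_def]
    conv_lhs => rw [← max_sub_max_neg (β i)]
    exact sub_smul (R := ℝ) (M := SignedMeasure (ℝ × ℝ)) _ _ _
  have hξsum : ξa + ξs = ((∑ i, (β i).toNNReal • Measure.dirac (p i)) + pos).toSignedMeasure
      - ((∑ i, (-(β i)).toNNReal • Measure.dirac (p i)) + neg).toSignedMeasure := by
    rw [hξam, hξs]
    simp only [Measure.toSignedMeasure_add]
    abel
  have htot : γdag + (ξa + ξs)
      = ((∑ i, (m i).toNNReal • Measure.dirac (p i))
          + ((∑ i, (β i).toNNReal • Measure.dirac (p i)) + pos)).toSignedMeasure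
        - ((∑ i, (-(β i)).toNNReal • Measure.dirac (p i)) + neg).toSignedMeasure := by
    rw [hγm, hξsum]
    simp only [Measure.toSignedMeasure_add]
    abel
  -- total variation of γdag
  have htvγ : γdag.totalVariation = (∑ i, (m i).toNNReal • Measure.dirac (p i)) := by
    rw [hγm, totalVariation_toSignedMeasure]
  have hsum_m : (γdag.totalVariation Set.univ).toReal = ∑ i, m i := by
    rw [htvγ]
    have h1 : ∫ x, (1 : ℝ) ∂(∑ i, (m i).toNNReal • Measure.dirac (p i))
        = ((∑ i, (m i).toNNReal • Measure.dirac (p i)) Set.univ).toReal := by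
        rw [integral_const, smul_eq_mul, mul_one, measureReal_def]
    rw [← h1, integral_sum_smul_dirac p _ measurable_const (by norm_num)]
    exact Finset.sum_congr rfl fun i _ => by
      rw [mul_one, Real.coe_toNNReal _ (hm i).le]
  -- the range of p is null for pos and neg
  obtain ⟨A, hAm, hA1, hA2⟩ := hsing
  have hrange : Set.range p ⊆ A := by
    rintro _ ⟨i, rfl⟩
    by_contra hx
    have h0 : γdag.totalVariation {p i} = 0 :=
      measure_mono_null (by simpa using hx) hA2
    have hval : ((∑ j, (m j).toNNReal • Measure.dirac (p j)) {p i}).toReal = m i := by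
      rw [Measure.finset_sum_apply, Finset.sum_eq_single i]
      · rw [Measure.smul_apply, Measure.dirac_apply_of_mem (Set.mem_singleton _)]
        simp [ENNReal.smul_def, Real.coe_toNNReal _ (hm i).le]
      · intro j _ hj
        have hne : p j ∉ ({p i} : Set (ℝ × ℝ)) := by
          simp only [Set.mem_singleton_iff]
          exact fun h => hj (hp h)
        rw [Measure.smul_apply, Measure.dirac_apply' _ (measurableSet_singleton _),
          Set.indicator_of_notMem hne]
        simp
      · simp
    rw [htvγ] at h0
    rw [h0, ENNReal.toReal_zero] at hval
    exact absurd hval.symm (ne_of_gt (hm i))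
  have hrm : MeasurableSet (Set.range p) := (Set.finite_range p).measurableSet
  have htvnull : ξs.totalVariation (Set.range p) = 0 :=
    measure_mono_null hrange hA1
  have hposnull : pos (Set.range p) = 0 := by
    have h := htvnull
    rw [hμtr, Measure.add_apply, add_eq_zero] at h
    exact h.1
  have hnegnull : neg (Set.range p) = 0 := by
    have h := htvnull
    rw [hμtr, Measure.add_apply, add_eq_zero] at h
    exact h.2
  -- the dual certificate test function f
  set g : ℝ × ℝ → ℝ := fun z => if z ∈ B then -1 else 1 with hgdef
  set f : ℝ × ℝ → ℝ := fun z => if z ∈ Set.range p then 1 else g z with hfdef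
  have hgm : Measurable g := Measurable.ite hBm measurable_const measurable_const
  have hfm : Measurable f := Measurable.ite hrm measurable_const hgm
  have hf1 : ∀ z, |f z| ≤ 1 := by
    intro z
    rw [hfdef, hgdef]
    dsimp only
    split_ifs <;> norm_num
  have hfrange : ∀ i, f (p i) = 1 := fun i => if_pos ⟨i, rfl⟩
  -- integrals of f against pos and neg
  have hface_pos : ∀ᵐ z ∂pos, f z = 1 := by
    have hnull : pos (Set.range p ∪ B) = 0 := measure_union_null hposnull hB1
    rw [ae_iff]
    refine measure_mono_null (fun z hz => ?_) hnull
    simp only [Set.mem_setOf_eq] at hz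
    by_contra hzn
    simp only [Set.mem_union, not_or] at hzn
    exact hz (by rw [hfdef]; dsimp only; rw [if_neg hzn.1, hgdef]; dsimp only; rw [if_neg hzn.2])
  have hface_neg : ∀ᵐ z ∂neg, f z = -1 := by
    have hnull : neg (Set.range p ∪ Bᶜ) = 0 := measure_union_null hnegnull hB2
    rw [ae_iff]
    refine measure_mono_null (fun z hz => ?_) hnull
    simp only [Set.mem_setOf_eq] at hz
    by_contra hzn
    simp only [Set.mem_union, Set.mem_compl_iff, not_or, not_not] at hzn
    exact hz (by rw [hfdef]; dsimp only; rw [if_neg hzn.1, hgdef]; dsimp only; rw [if_pos hzn.2])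
  have hintf_pos : ∫ z, f z ∂pos = (pos Set.univ).toReal := by
    rw [integral_congr_ae hface_pos, integral_const, smul_eq_mul, mul_one, measureReal_def]
  have hintf_neg : ∫ z, f z ∂neg = -(neg Set.univ).toReal := by
    rw [integral_congr_ae hface_neg, integral_const, smul_eq_mul, measureReal_def]
    ring
  -- key: value of the signed integral of f against the full measure
  have hItot : signedIntegral f (γdag + (ξa + ξs))
      = (∑ i, m i) + (∑ i, β i) + ((pos Set.univ).toReal + (neg Set.univ).toReal) := by
    rw [signedIntegral_eq _ _ _ htot hfm hf1,
      integral_add_measure (integrable_of_abs_le_one _ hfm hf1)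
        (integrable_of_abs_le_one _ hfm hf1),
      integral_add_measure (integrable_of_abs_le_one _ hfm hf1)
        (integrable_of_abs_le_one _ hfm hf1),
      integral_add_measure (integrable_of_abs_le_one _ hfm hf1)
        (integrable_of_abs_le_one _ hfm hf1),
      integral_sum_smul_dirac p _ hfm hf1, integral_sum_smul_dirac p _ hfm hf1,
      integral_sum_smul_dirac p _ hfm hf1, hintf_pos, hintf_neg]
    have e1 : ∑ i, ((m i).toNNReal : ℝ) * f (p i) = ∑ i, m i :=
      Finset.sum_congr rfl fun i _ => by
        rw [hfrange, mul_one, Real.coe_toNNReal _ (hm i).le]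
    have e2 : ∑ i, ((β i).toNNReal : ℝ) * f (p i)
        - ∑ i, (((-(β i)).toNNReal : ℝ)) * f (p i) = ∑ i, β i := by
      rw [← Finset.sum_sub_distrib]
      refine Finset.sum_congr rfl fun i _ => ?_
      rw [← sub_mul, max_sub_max_neg, hfrange, mul_one]
    linarith
  -- value of the signed integral of q against ξa + ξs
  have hIq_sum : signedIntegral q (ξa + ξs) = (∑ i, |β i|) + signedIntegral q ξs := by
    rw [signedIntegral_eq _ _ _ hξsum hq hq1,
      integral_add_measure (integrable_of_abs_le_one _ hq hq1)
        (integrable_of_abs_le_one _ hq hq1),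
      integral_add_measure (integrable_of_abs_le_one _ hq hq1)
        (integrable_of_abs_le_one _ hq hq1),
      integral_sum_smul_dirac p _ hq hq1, integral_sum_smul_dirac p _ hq hq1, hIqs]
    have e3 : ∑ i, ((β i).toNNReal : ℝ) * q (p i)
        - ∑ i, (((-(β i)).toNNReal : ℝ)) * q (p i) = ∑ i, |β i| := by
      rw [← Finset.sum_sub_distrib]
      refine Finset.sum_congr rfl fun i _ => ?_
      rw [← sub_mul, max_sub_max_neg, hqsign, real_mul_sign]
    linarith
  have hSβ : (∑ i, |β i|) = - signedIntegral q ξs := by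
    rw [hIq_sum] at hint
    linarith
  -- strict bound on the singular part
  have hqabs1 : ∀ z, |(fun w => |q w|) z| ≤ 1 := fun z => by
    rw [abs_abs]; exact hq1 z
  have habs2 : |signedIntegral q ξs| ≤ ∫ z, |q z| ∂ξs.totalVariation := by
    rw [hIqs, hμtr, integral_add_measure (integrable_of_abs_le_one _ hq.abs hqabs1)
      (integrable_of_abs_le_one _ hq.abs hqabs1)]
    calc |∫ z, q z ∂pos - ∫ z, q z ∂neg| ≤ |∫ z, q z ∂pos| + |∫ z, q z ∂neg| := abs_sub _ _
      _ ≤ ∫ z, |q z| ∂pos + ∫ z, |q z| ∂neg :=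
        add_le_add (by simpa [Real.norm_eq_abs] using norm_integral_le_integral_norm (μ := pos) q)
          (by simpa [Real.norm_eq_abs] using norm_integral_le_integral_norm (μ := neg) q)
  have hμt_ne : ξs ≠ 0 → ξs.totalVariation Set.univ ≠ 0 := by
    intro hne h0
    apply hne
    ext i hi
    rw [VectorMeasure.zero_apply]
    exact SignedMeasure.null_of_totalVariation_zero _
      (measure_mono_null (Set.subset_univ i) h0)
  have hstrict : ξs ≠ 0 →
      ∫ z, |q z| ∂ξs.totalVariation < (ξs.totalVariation Set.univ).toReal := by
    intro hne
    have hμt0 : ξs.totalVariation Set.univ ≠ 0 := hμt_ne hne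
    haveI : IsFiniteMeasure ξs.totalVariation := by rw [hμtr]; infer_instance
    have hposint : 0 < ∫ z, (1 - |q z|) ∂ξs.totalVariation := by
      have hint2 : Integrable (fun z => 1 - |q z|) ξs.totalVariation :=
        (integrable_const 1).sub (integrable_of_abs_le_one _ hq.abs hqabs1)
      rw [integral_pos_iff_support_of_nonneg_ae
        (Filter.Eventually.of_forall fun z => by simp [sub_nonneg, hq1 z]) hint2]
      have hsupp : (Set.range p)ᶜ ⊆ Function.support fun z => 1 - |q z| := by
        intro z hz
        simp only [Function.mem_support]
        have := hqlt z hz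
        intro h0
        rw [sub_eq_zero] at h0
        rw [← h0] at this
        exact lt_irrefl _ this
      have hc : ξs.totalVariation (Set.range p)ᶜ = ξs.totalVariation Set.univ := by
        rw [measure_compl hrm (measure_ne_top _ _), htvnull, tsub_zero]
      calc (0 : ℝ≥0∞) < ξs.totalVariation (Set.range p)ᶜ := by
            rw [hc]; exact pos_iff_ne_zero.mpr hμt0
        _ ≤ _ := measure_mono hsupp
    rw [integral_sub (integrable_const 1) (integrable_of_abs_le_one _ hq.abs hqabs1),
      integral_const, smul_eq_mul, mul_one, measureReal_def] at hposint
    linarith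
  have hμt_toReal : (ξs.totalVariation Set.univ).toReal
      = (pos Set.univ).toReal + (neg Set.univ).toReal := by
    rw [hμtr, Measure.add_apply, ENNReal.toReal_add (measure_ne_top _ _) (measure_ne_top _ _)]
  have hmain : ξs ≠ 0 →
      (∑ i, |β i|) < (pos Set.univ).toReal + (neg Set.univ).toReal := by
    intro hne
    calc (∑ i, |β i|) = - signedIntegral q ξs := hSβ
      _ ≤ |signedIntegral q ξs| := neg_le_abs _
      _ ≤ ∫ z, |q z| ∂ξs.totalVariation := habs2
      _ < (ξs.totalVariation Set.univ).toReal := hstrict hne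
      _ = _ := hμt_toReal
  have part1 : ξs ≠ 0 →
      (γdag.totalVariation Set.univ).toReal
        < ((γdag + (ξa + ξs)).totalVariation Set.univ).toReal := by
    intro hne
    have h1 := signedIntegral_le_tv (γdag + (ξa + ξs)) hfm hf1
    have h3 := hmain hne
    have h4 : -(∑ i, β i) ≤ ∑ i, |β i| := by
      calc -(∑ i, β i) = ∑ i, -(β i) := by rw [Finset.sum_neg_distrib]
        _ ≤ ∑ i, |β i| := Finset.sum_le_sum fun i _ => neg_le_abs _
    rw [hsum_m]
    linarith
  refine ⟨part1, fun hle => ?_⟩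
  have hξs0 : ξs = 0 := by
    by_contra hne
    exact absurd hle (not_le.2 (part1 hne))
  have hq0 : signedIntegral q ξs = 0 := by
    rw [hξs0]
    simp [signedIntegral, SignedMeasure.toJordanDecomposition_zero]
  have hβ0 : ∑ i, |β i| = 0 := by rw [hSβ, hq0, neg_zero]
  have hβ := (Finset.sum_eq_zero_iff_of_nonneg (fun i _ => abs_nonneg (β i))).1 hβ0
  refine ⟨?_, hξs0⟩
  rw [hξa]
  apply Finset.sum_eq_zero
  intro i _
  rw [abs_eq_zero.1 (hβ i (Finset.mem_univ i)), zero_smul]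
end

section
/- (Bregman distance estimate for noisy reconstruction) Let X, Y be dual spaces of topological vector spaces, K : X → Y weak-* continuous linear with predual K* : Y* → X*, G : X → ℝ ∪ {∞} convex, F_f : Y → [0,∞) convex with F_{f^δ}(f†) ≤ δ where f† = K y†. Suppose w† ∈ Y* satisfies the source condition −K*w† ∈ ∂G(y†). Then any minimizer y^δ of y ↦ G(y) + (1/α) F_{f^δ}(K y) satisfies D_G^{−K*w†}(y^δ, y†) ≤ (3δ + F*_{f^δ}(2αw†) + F*_{f^δ}(−2αw†)) / (2α), where D_G^w(a,b) = G(a) − G(b) − ⟨w, a−b⟩ is the Bregman distance and F* is the convex conjugate. -/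
/-- Bregman distance estimate for noisy reconstruction. `X, Y` are (weak-*) dual
spaces with preduals paired via the bilinear pairings `pX : V →ₗ X →ₗ ℝ` and
`pY : W →ₗ Y →ₗ ℝ`; `K : X →ₗ Y` has predual `Kstar : W →ₗ V`. Under the source
condition `−K*w† ∈ ∂G(y†)` and noise level `F_{f^δ}(K y†) ≤ δ`, any minimizer `y^δ`
of `G + (1/α) F_{f^δ}(K ·)` satisfies
`D_G^{−K*w†}(y^δ, y†) ≤ (3δ + F*(2αw†) + F*(−2αw†)) / (2α)`, where the conjugate
values are encoded through arbitrary upper bounds `c₁, c₂` of the defining suprema. -/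
theorem stmt_15 {X Y V W : Type*} [AddCommGroup X] [Module ℝ X]
    [AddCommGroup Y] [Module ℝ Y] [AddCommGroup V] [Module ℝ V]
    [AddCommGroup W] [Module ℝ W]
    (pX : V →ₗ[ℝ] X →ₗ[ℝ] ℝ) (pY : W →ₗ[ℝ] Y →ₗ[ℝ] ℝ)
    (K : X →ₗ[ℝ] Y) (Kstar : W →ₗ[ℝ] V)
    (hK : ∀ (w : W) (x : X), pX (Kstar w) x = pY w (K x))
    (G : X → ℝ) (hG : ConvexOn ℝ Set.univ G)
    (F : Y → ℝ) (hF : ConvexOn ℝ Set.univ F) (hFnonneg : ∀ y, 0 ≤ F y)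
    (δ α : ℝ) (hα : 0 < α)
    (ydag : X) (hnoise : F (K ydag) ≤ δ)
    (wdag : W)
    (hsource : ∀ z : X, G ydag - pX (Kstar wdag) (z - ydag) ≤ G z)
    (ydel : X)
    (hmin : ∀ z : X, G ydel + (1 / α) * F (K ydel) ≤ G z + (1 / α) * F (K z))
    (c₁ c₂ : ℝ)
    (hc₁ : ∀ y : Y, pY ((2 * α) • wdag) y - F y ≤ c₁)
    (hc₂ : ∀ y : Y, pY (-((2 * α) • wdag)) y - F y ≤ c₂) :
    G ydel - G ydag + pX (Kstar wdag) (ydel - ydag) ≤ (3 * δ + c₁ + c₂) / (2 * α) := by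
  have h1 := hmin ydag
  have h2 := hc₁ (K ydel)
  have h3 := hc₂ (K ydag)
  have h5 := hFnonneg (K ydel)
  have h4 : pX (Kstar wdag) (ydel - ydag) = pY wdag (K ydel) - pY wdag (K ydag) := by
    rw [map_sub, hK, hK]
  have hs : pY ((2 * α) • wdag) (K ydel) = 2 * α * pY wdag (K ydel) := by simp
  have hs2 : pY (-((2 * α) • wdag)) (K ydag) = -(2 * α * pY wdag (K ydag)) := by simp
  rw [hs] at h2
  rw [hs2] at h3
  have h1' : α * G ydel + F (K ydel) ≤ α * G ydag + F (K ydag) := by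
    have := mul_le_mul_of_nonneg_left h1 hα.le
    field_simp at this
    linarith
  rw [h4, le_div_iff₀ (by positivity : (0:ℝ) < 2 * α)]
  nlinarith [hnoise, h1', h2, h3, h5]
end

section
/- (Unbalanced Wasserstein divergence from mass estimates, p = 2) Let R > 0, ν₁ = Σ_{i=1}^N m_i δ_{x_i} a nonnegative measure on ℝ^d with the x_i at mutual distance at least 2R, and ν₂ a nonnegative finite Radon measure satisfying: ν₂(ℝ^d \ B_R({x_1,…,x_N})) ≤ A, Σ_i |ν₁(B_R(x_i)) − ν₂(B_R(x_i))| ≤ B, and Σ_i ∫_{B_R(x_i)} dist(x, x_i)² dν₂(x) ≤ C₂. Then the unbalanced Wasserstein-2 divergence satisfies UW²_R(ν₁, ν₂) ≤ (R²/2)(A + B) + C₂. -/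
open MeasureTheory Metric ENNReal NNReal

/-- Squared Wasserstein-2 cost between two nonnegative measures, via couplings
(`⊤` if no coupling exists, e.g. for unequal masses). -/
noncomputable def W2sq {E : Type*} [MeasurableSpace E] [PseudoMetricSpace E]
    (μ ν : Measure E) : ℝ≥0∞ :=
  ⨅ (π : Measure (E × E)) (_ : π.map Prod.fst = μ ∧ π.map Prod.snd = ν),
    ∫⁻ p, ENNReal.ofReal (dist p.1 p.2 ^ 2) ∂π

/-- Total-variation distance `‖μ − ν‖_M` between nonnegative measures, expressed
via truncated measure subtraction. -/
noncomputable def massDiff {E : Type*} [MeasurableSpace E] (μ ν : Measure E) : ℝ≥0∞ :=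
  (μ - ν) Set.univ + (ν - μ) Set.univ

/-- Unbalanced Wasserstein-2 divergence
`UW²_R(ν₁, ν₂) = inf_ν { W₂²(ν, ν₂) + (R²/2) ‖ν₁ − ν‖_M }`. -/
noncomputable def UW2 {E : Type*} [MeasurableSpace E] [PseudoMetricSpace E]
    (R : ℝ) (ν₁ ν₂ : Measure E) : ℝ≥0∞ :=
  ⨅ ν : Measure E, W2sq ν ν₂ + ENNReal.ofReal (R ^ 2 / 2) * massDiff ν₁ ν

/-- Pushforward of a finite sum of measures. -/
lemma map_finset_sum_aux {α β ι : Type*} [MeasurableSpace α] [MeasurableSpace β]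
    (s : Finset ι) (μ : ι → Measure α) {f : α → β} (hf : Measurable f) :
    (∑ i ∈ s, μ i).map f = ∑ i ∈ s, (μ i).map f := by
  induction s using Finset.cons_induction with
  | empty => simp
  | cons i s hi ih => rw [Finset.sum_cons, Finset.sum_cons, Measure.map_add _ _ hf, ih]

/-- Unbalanced Wasserstein divergence from mass estimates (p = 2): if `ν₂` has at
most mass `A` outside the `R`-balls around the `x_i`, ball masses deviating from
those of `ν₁ = Σ m_i δ_{x_i}` by at most `B` in total, and second moments within the
balls at most `C₂`, then `UW²_R(ν₁, ν₂) ≤ (R²/2)(A + B) + C₂`. -/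
theorem stmt_17 {d N : ℕ} (R : ℝ) (hR : 0 < R)
    (x : Fin N → EuclideanSpace ℝ (Fin d)) (m : Fin N → ℝ≥0)
    (hsep : ∀ i j : Fin N, i ≠ j → 2 * R ≤ dist (x i) (x j))
    (ν₁ ν₂ : Measure (EuclideanSpace ℝ (Fin d))) [IsFiniteMeasure ν₂]
    (hν₁ : ν₁ = ∑ i, ((m i : ℝ≥0∞)) • Measure.dirac (x i))
    (A B C₂ : ℝ)
    (hA : (ν₂ ((⋃ i, Metric.ball (x i) R)ᶜ)).toReal ≤ A)
    (hB : ∑ i, |(ν₁ (Metric.ball (x i) R)).toReal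
        - (ν₂ (Metric.ball (x i) R)).toReal| ≤ B)
    (hC : ∑ i, (∫ z in Metric.ball (x i) R, dist z (x i) ^ 2 ∂ν₂) ≤ C₂) :
    UW2 R ν₁ ν₂ ≤ ENNReal.ofReal (R ^ 2 / 2 * (A + B) + C₂) := by
  classical
  have hBm : ∀ i : Fin N, MeasurableSet (Metric.ball (x i) R) := fun i => measurableSet_ball
  have hUm : MeasurableSet (⋃ i, Metric.ball (x i) R) := MeasurableSet.iUnion fun i => hBm i
  have hdisj : Pairwise (Function.onFun Disjoint fun i => Metric.ball (x i) R) := fun i j hij =>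
    Metric.ball_disjoint_ball (by linarith [hsep i j hij])
  -- value of ν₁ on the balls
  have hν₁B : ∀ i, ν₁ (Metric.ball (x i) R) = (m i : ℝ≥0∞) := by
    intro i
    rw [hν₁, Measure.coe_finset_sum, Finset.sum_apply]
    rw [Finset.sum_eq_single i]
    · simp [Measure.smul_apply, Measure.dirac_apply, Set.indicator, mem_ball_self hR]
    · intro j _ hj
      have h2 : 2 * R ≤ dist (x j) (x i) := hsep j i hj
      have hnot : x j ∉ Metric.ball (x i) R := by
        intro h
        rw [mem_ball] at h
        linarith
      simp [Measure.smul_apply, Measure.dirac_apply, Set.indicator, hnot]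
    · intro h
      exact absurd (Finset.mem_univ i) h
  set ν : Measure (EuclideanSpace ℝ (Fin d)) :=
    ν₂.restrict (⋃ i, Metric.ball (x i) R)ᶜ +
      ∑ i, (ν₂ (Metric.ball (x i) R)) • Measure.dirac (x i) with hνdef
  set π : Measure (EuclideanSpace ℝ (Fin d) × EuclideanSpace ℝ (Fin d)) :=
    (ν₂.restrict (⋃ i, Metric.ball (x i) R)ᶜ).map (fun z => (z, z)) +
      ∑ i, ((ν₂.restrict (Metric.ball (x i) R)).map (Prod.mk (x i))) with hπdef
  have hdiag : Measurable (fun z : EuclideanSpace ℝ (Fin d) => (z, z)) :=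
    measurable_id.prodMk measurable_id
  -- first marginal of π is ν
  have hfst : π.map Prod.fst = ν := by
    rw [hπdef, Measure.map_add _ _ measurable_fst, map_finset_sum_aux _ _ measurable_fst, hνdef]
    congr 1
    · rw [Measure.map_map measurable_fst hdiag]
      exact Measure.map_id
    · refine Finset.sum_congr rfl fun i _ => ?_
      rw [Measure.map_map measurable_fst measurable_prodMk_left]
      rw [show (Prod.fst ∘ Prod.mk (x i) :
          EuclideanSpace ℝ (Fin d) → EuclideanSpace ℝ (Fin d)) =
          fun _ => x i from rfl]
      rw [Measure.map_const, Measure.restrict_apply_univ]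
  -- second marginal of π is ν₂
  have hsnd : π.map Prod.snd = ν₂ := by
    rw [hπdef, Measure.map_add _ _ measurable_snd, map_finset_sum_aux _ _ measurable_snd]
    have h1 : ((ν₂.restrict (⋃ i, Metric.ball (x i) R)ᶜ).map
        (fun z => (z, z))).map Prod.snd = ν₂.restrict (⋃ i, Metric.ball (x i) R)ᶜ := by
      rw [Measure.map_map measurable_snd hdiag]
      exact Measure.map_id
    have h2 : ∀ i, ((ν₂.restrict (Metric.ball (x i) R)).map (Prod.mk (x i))).map Prod.snd
        = ν₂.restrict (Metric.ball (x i) R) := by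
      intro i
      rw [Measure.map_map measurable_snd measurable_prodMk_left]
      exact Measure.map_id
    rw [h1, Finset.sum_congr rfl fun i _ => h2 i, ← Measure.sum_fintype,
      ← Measure.restrict_iUnion hdisj hBm, Measure.restrict_compl_add_restrict hUm]
  -- the transport cost of π is at most C₂
  have hC0 : 0 ≤ C₂ := by
    refine le_trans (Finset.sum_nonneg fun i _ => ?_) hC
    exact integral_nonneg fun z => by positivity
  have hmeasf : Measurable fun p : EuclideanSpace ℝ (Fin d) × EuclideanSpace ℝ (Fin d) =>
      ENNReal.ofReal (dist p.1 p.2 ^ 2) :=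
    (((continuous_fst.dist continuous_snd).pow 2).measurable).ennreal_ofReal
  have hW : W2sq ν ν₂ ≤ ENNReal.ofReal C₂ := by
    have hle : W2sq ν ν₂ ≤ ∫⁻ p, ENNReal.ofReal (dist p.1 p.2 ^ 2) ∂π :=
      iInf_le_of_le π (iInf_le_of_le ⟨hfst, hsnd⟩ le_rfl)
    refine hle.trans ?_
    rw [hπdef, lintegral_add_measure, lintegral_finset_sum_measure]
    have hzero : ∫⁻ p, ENNReal.ofReal (dist p.1 p.2 ^ 2)
        ∂((ν₂.restrict (⋃ i, Metric.ball (x i) R)ᶜ).map (fun z => (z, z))) = 0 := by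
      rw [lintegral_map hmeasf hdiag]
      simp
    rw [hzero, zero_add]
    have heach : ∀ i, ∫⁻ p, ENNReal.ofReal (dist p.1 p.2 ^ 2)
        ∂((ν₂.restrict (Metric.ball (x i) R)).map (Prod.mk (x i)))
        = ENNReal.ofReal (∫ z in Metric.ball (x i) R, dist z (x i) ^ 2 ∂ν₂) := by
      intro i
      rw [lintegral_map hmeasf measurable_prodMk_left]
      have hint : Integrable (fun z => dist z (x i) ^ 2)
          (ν₂.restrict (Metric.ball (x i) R)) := by
        refine Integrable.mono' (integrable_const (R ^ 2))
          (((continuous_id.dist continuous_const).pow 2).aestronglyMeasurable) ?_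
        filter_upwards [ae_restrict_mem (hBm i)] with z hz
        rw [Real.norm_eq_abs, abs_of_nonneg (by positivity)]
        have h1 : dist z (x i) < R := mem_ball.mp hz
        nlinarith [dist_nonneg (x := z) (y := x i)]
      rw [ofReal_integral_eq_lintegral_ofReal hint
        (Filter.Eventually.of_forall fun z => by positivity)]
      refine lintegral_congr fun z => ?_
      rw [dist_comm]
    rw [Finset.sum_congr rfl fun i _ => heach i,
      ← ENNReal.ofReal_sum_of_nonneg fun i _ => integral_nonneg fun z => by positivity]
    exact ENNReal.ofReal_le_ofReal hC
  -- mass difference bound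
  have hA0 : 0 ≤ A := le_trans ENNReal.toReal_nonneg hA
  have hB0 : 0 ≤ B := le_trans (Finset.sum_nonneg fun i _ => abs_nonneg _) hB
  have hmd : massDiff ν₁ ν ≤ ENNReal.ofReal (A + B) := by
    set ξ₁ : Measure (EuclideanSpace ℝ (Fin d)) :=
      ∑ i, ((m i : ℝ≥0∞) - ν₂ (Metric.ball (x i) R)) • Measure.dirac (x i) with hξ₁def
    set ξ₂ : Measure (EuclideanSpace ℝ (Fin d)) :=
      ν₂.restrict (⋃ i, Metric.ball (x i) R)ᶜ +
        ∑ i, (ν₂ (Metric.ball (x i) R) - (m i : ℝ≥0∞)) • Measure.dirac (x i) with hξ₂def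
    have h1 : ν₁ - ν ≤ ξ₁ := by
      refine Measure.sub_le_of_le_add ?_
      rw [Measure.le_iff]
      intro s hs
      rw [hν₁, hξ₁def, hνdef]
      simp only [Measure.add_apply, Measure.coe_finset_sum, Finset.sum_apply,
        Measure.smul_apply, smul_eq_mul]
      calc ∑ i, (m i : ℝ≥0∞) * Measure.dirac (x i) s
          ≤ ∑ i, (((m i : ℝ≥0∞) - ν₂ (Metric.ball (x i) R)) + ν₂ (Metric.ball (x i) R))
            * Measure.dirac (x i) s := by
            refine Finset.sum_le_sum fun i _ => ?_
            exact mul_le_mul_left le_tsub_add _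
        _ = (∑ i, ((m i : ℝ≥0∞) - ν₂ (Metric.ball (x i) R)) * Measure.dirac (x i) s)
            + ∑ i, ν₂ (Metric.ball (x i) R) * Measure.dirac (x i) s := by
            rw [← Finset.sum_add_distrib]
            exact Finset.sum_congr rfl fun i _ => add_mul _ _ _
        _ ≤ (∑ i, ((m i : ℝ≥0∞) - ν₂ (Metric.ball (x i) R)) * Measure.dirac (x i) s)
            + ((ν₂.restrict (⋃ i, Metric.ball (x i) R)ᶜ) s
              + ∑ i, ν₂ (Metric.ball (x i) R) * Measure.dirac (x i) s) := by
            exact add_le_add_right (le_add_left le_rfl) _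
    have h2 : ν - ν₁ ≤ ξ₂ := by
      refine Measure.sub_le_of_le_add ?_
      rw [Measure.le_iff]
      intro s hs
      rw [hν₁, hξ₂def, hνdef]
      simp only [Measure.add_apply, Measure.coe_finset_sum, Finset.sum_apply,
        Measure.smul_apply, smul_eq_mul]
      rw [add_assoc]
      refine add_le_add_right ?_ _
      calc ∑ i, ν₂ (Metric.ball (x i) R) * Measure.dirac (x i) s
          ≤ ∑ i, ((ν₂ (Metric.ball (x i) R) - (m i : ℝ≥0∞)) + (m i : ℝ≥0∞))
            * Measure.dirac (x i) s := by
            refine Finset.sum_le_sum fun i _ => ?_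
            exact mul_le_mul_left le_tsub_add _
        _ = (∑ i, (ν₂ (Metric.ball (x i) R) - (m i : ℝ≥0∞)) * Measure.dirac (x i) s)
            + ∑ i, (m i : ℝ≥0∞) * Measure.dirac (x i) s := by
            rw [← Finset.sum_add_distrib]
            exact Finset.sum_congr rfl fun i _ => add_mul _ _ _
    have hξ₁u : ξ₁ Set.univ = ∑ i, ((m i : ℝ≥0∞) - ν₂ (Metric.ball (x i) R)) := by
      rw [hξ₁def]
      simp [Measure.coe_finset_sum, Measure.smul_apply]
    have hξ₂u : ξ₂ Set.univ = ν₂ ((⋃ i, Metric.ball (x i) R)ᶜ)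
        + ∑ i, (ν₂ (Metric.ball (x i) R) - (m i : ℝ≥0∞)) := by
      rw [hξ₂def]
      simp [Measure.coe_finset_sum, Measure.smul_apply, Measure.restrict_apply_univ]
    have key : ∀ i, ((m i : ℝ≥0∞) - ν₂ (Metric.ball (x i) R))
        + (ν₂ (Metric.ball (x i) R) - (m i : ℝ≥0∞))
        = ENNReal.ofReal |(ν₁ (Metric.ball (x i) R)).toReal
            - (ν₂ (Metric.ball (x i) R)).toReal| := by
      intro i
      rw [hν₁B i]
      have hfin : ν₂ (Metric.ball (x i) R) ≠ ⊤ := measure_ne_top _ _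
      have hmfin : ((m i : ℝ≥0∞)) ≠ ⊤ := ENNReal.coe_ne_top
      rcases le_total ((m i : ℝ≥0∞)) (ν₂ (Metric.ball (x i) R)) with h | h
      · rw [tsub_eq_zero_of_le h, zero_add,
          abs_of_nonpos (by simpa using sub_nonpos.mpr (ENNReal.toReal_mono hfin h)),
          neg_sub, ENNReal.ofReal_sub _ ENNReal.toReal_nonneg,
          ENNReal.ofReal_toReal hfin, ENNReal.ofReal_toReal hmfin]
      · rw [tsub_eq_zero_of_le h, add_zero,
          abs_of_nonneg (by simpa using sub_nonneg.mpr (ENNReal.toReal_mono hmfin h)),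
          ENNReal.ofReal_sub _ ENNReal.toReal_nonneg,
          ENNReal.ofReal_toReal hfin, ENNReal.ofReal_toReal hmfin]
    calc massDiff ν₁ ν ≤ ξ₁ Set.univ + ξ₂ Set.univ :=
          add_le_add (Measure.le_iff'.mp h1 Set.univ) (Measure.le_iff'.mp h2 Set.univ)
      _ = ν₂ ((⋃ i, Metric.ball (x i) R)ᶜ)
          + ∑ i, (((m i : ℝ≥0∞) - ν₂ (Metric.ball (x i) R))
            + (ν₂ (Metric.ball (x i) R) - (m i : ℝ≥0∞))) := by
          rw [hξ₁u, hξ₂u, Finset.sum_add_distrib]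
          ring
      _ = ENNReal.ofReal ((ν₂ ((⋃ i, Metric.ball (x i) R)ᶜ)).toReal
          + ∑ i, |(ν₁ (Metric.ball (x i) R)).toReal - (ν₂ (Metric.ball (x i) R)).toReal|) := by
          rw [ENNReal.ofReal_add ENNReal.toReal_nonneg
            (Finset.sum_nonneg fun i _ => abs_nonneg _),
            ENNReal.ofReal_toReal (measure_ne_top _ _),
            ENNReal.ofReal_sum_of_nonneg fun i _ => abs_nonneg _]
          exact congrArg _ (Finset.sum_congr rfl fun i _ => key i)
      _ ≤ ENNReal.ofReal (A + B) := ENNReal.ofReal_le_ofReal (add_le_add hA hB)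
  -- conclude
  calc UW2 R ν₁ ν₂ ≤ W2sq ν ν₂ + ENNReal.ofReal (R ^ 2 / 2) * massDiff ν₁ ν := iInf_le _ ν
    _ ≤ ENNReal.ofReal C₂ + ENNReal.ofReal (R ^ 2 / 2) * ENNReal.ofReal (A + B) :=
        add_le_add hW (mul_le_mul_right hmd _)
    _ = ENNReal.ofReal (R ^ 2 / 2 * (A + B) + C₂) := by
        rw [← ENNReal.ofReal_mul (by positivity),
          ENNReal.ofReal_add (by positivity) hC0, add_comm]
end

section
/- (Exact reconstruction of reconstructible snapshots) Let (u, γ) minimize ‖γ‖_M over all pairs (γ, u) of nonnegative measures satisfying the coupling constraints Mv_t γ = R u_t for all t ∈ Σ and the data constraints Ob_t u_t = f†_t for all t ∈ T, where f†_t = Ob_t u†_t. If at a time t₀ ∈ T the snapshot u†_{t₀} is the unique minimizer of ‖u‖_M subject to Ob_{t₀} u = f†_{t₀} and u ≥ 0, then u_{t₀} = u†_{t₀}. The key structural facts are: ‖u_t‖_M = ‖γ‖_M for all t (by norm preservation of the nonnegative pushforwards in the constraints), and ‖γ‖_M ≤ ‖γ†‖_M = ‖u†_{t₀}‖_M by optimality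 against the ground-truth competitor. -/
open MeasureTheory

/-- Exact reconstruction of reconstructible snapshots: if `(u, γ)` minimizes `‖γ‖_M`
among all pairs of nonnegative measures satisfying the coupling constraints
`Mv_t γ = R u_t` for all `t ∈ Σ` and the data constraints `Ob_t u_t = f†_t` for
`t ∈ T` (with `f†_t = Ob_t u†_t` the noise-free data of the ground truth
`u†_t = (move by t)_# λ†`), and if at a time `t₀ ∈ T` the snapshot `u†_{t₀}` is the
unique minimizer of the static problem, then `u_{t₀} = u†_{t₀}`. Here `R` is the
Radon transform built from the direction measure `H_Θ` and `Mv_t` the anglewise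
move operator, both realized as pushforwards. -/
theorem stmt_18 {d : ℕ} {H : Type*}
    (HΘ : Measure (Metric.sphere (0 : EuclideanSpace ℝ (Fin d)) 1))
    [IsProbabilityMeasure HΘ]
    (Ob : ℝ → Measure (EuclideanSpace ℝ (Fin d)) → H)
    (Sig : Set ℝ) (T : Finset ℝ) (hTSig : ↑T ⊆ Sig) (t₀ : ℝ) (ht₀ : t₀ ∈ T)
    (lamdag : Measure (EuclideanSpace ℝ (Fin d) × EuclideanSpace ℝ (Fin d)))
    [IsFiniteMeasure lamdag]
    (udag : ℝ → Measure (EuclideanSpace ℝ (Fin d)))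
    (hudag : ∀ t, udag t = lamdag.map (fun p => p.1 + t • p.2))
    (Rop : Measure (EuclideanSpace ℝ (Fin d)) →
      Measure (Metric.sphere (0 : EuclideanSpace ℝ (Fin d)) 1 × ℝ))
    (hRop : ∀ ν, Rop ν = (HΘ.prod ν).map
      (fun q => (q.1, (inner ℝ (q.1 : EuclideanSpace ℝ (Fin d)) q.2 : ℝ))))
    (Mv : ℝ → Measure (Metric.sphere (0 : EuclideanSpace ℝ (Fin d)) 1 × ℝ × ℝ) →
      Measure (Metric.sphere (0 : EuclideanSpace ℝ (Fin d)) 1 × ℝ))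
    (hMv : ∀ t γ, Mv t γ = γ.map (fun q => (q.1, q.2.1 + t * q.2.2)))
    (u : ℝ → Measure (EuclideanSpace ℝ (Fin d))) (hufin : ∀ t, IsFiniteMeasure (u t))
    (γ : Measure (Metric.sphere (0 : EuclideanSpace ℝ (Fin d)) 1 × ℝ × ℝ))
    [IsFiniteMeasure γ]
    (hadm₁ : ∀ t ∈ Sig, Mv t γ = Rop (u t))
    (hadm₂ : ∀ t ∈ T, Ob t (u t) = Ob t (udag t))
    (hopt : ∀ (u' : ℝ → Measure (EuclideanSpace ℝ (Fin d)))
        (γ' : Measure (Metric.sphere (0 : EuclideanSpace ℝ (Fin d)) 1 × ℝ × ℝ)),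
      (∀ t, IsFiniteMeasure (u' t)) → IsFiniteMeasure γ' →
      (∀ t ∈ Sig, Mv t γ' = Rop (u' t)) → (∀ t ∈ T, Ob t (u' t) = Ob t (udag t)) →
      γ Set.univ ≤ γ' Set.univ)
    (hstatic : ∀ w : Measure (EuclideanSpace ℝ (Fin d)), IsFiniteMeasure w →
      Ob t₀ w = Ob t₀ (udag t₀) → w Set.univ ≤ udag t₀ Set.univ → w = udag t₀) :
    u t₀ = udag t₀ := by
  classical
  haveI := hufin t₀
  have hmove : ∀ t : ℝ, Measurable
      (fun p : EuclideanSpace ℝ (Fin d) × EuclideanSpace ℝ (Fin d) => p.1 + t • p.2) := by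
    intro t; fun_prop
  have hinner : Measurable (fun q : (Metric.sphere (0 : EuclideanSpace ℝ (Fin d)) 1) ×
      EuclideanSpace ℝ (Fin d) =>
      (q.1, (inner ℝ (q.1 : EuclideanSpace ℝ (Fin d)) q.2 : ℝ))) :=
    measurable_fst.prodMk
      ((Continuous.inner (continuous_subtype_val.comp continuous_fst)
        continuous_snd).measurable)
  have hmv : ∀ t : ℝ, Measurable
      (fun q : (Metric.sphere (0 : EuclideanSpace ℝ (Fin d)) 1) × ℝ × ℝ =>
      (q.1, q.2.1 + t * q.2.2)) := by
    intro t; fun_prop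
  -- ground-truth lifted measure
  set γd : Measure ((Metric.sphere (0 : EuclideanSpace ℝ (Fin d)) 1) × ℝ × ℝ) :=
    (HΘ.prod lamdag).map (fun q =>
      (q.1, (inner ℝ (q.1 : EuclideanSpace ℝ (Fin d)) q.2.1 : ℝ),
        (inner ℝ (q.1 : EuclideanSpace ℝ (Fin d)) q.2.2 : ℝ))) with hγd
  have hγdmeas : Measurable
      (fun q : (Metric.sphere (0 : EuclideanSpace ℝ (Fin d)) 1) ×
        (EuclideanSpace ℝ (Fin d) × EuclideanSpace ℝ (Fin d)) =>
      (q.1, (inner ℝ (q.1 : EuclideanSpace ℝ (Fin d)) q.2.1 : ℝ),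
        (inner ℝ (q.1 : EuclideanSpace ℝ (Fin d)) q.2.2 : ℝ))) :=
    measurable_fst.prodMk (Measurable.prodMk
      (Measurable.inner (continuous_subtype_val.comp continuous_fst).measurable
        (measurable_fst.comp measurable_snd))
      (Measurable.inner (continuous_subtype_val.comp continuous_fst).measurable
        (measurable_snd.comp measurable_snd)))
  have hprodmass : ∀ ν : Measure (EuclideanSpace ℝ (Fin d)), IsFiniteMeasure ν →
      (HΘ.prod ν) Set.univ = ν Set.univ := by
    intro ν hν
    rw [← Set.univ_prod_univ, Measure.prod_prod, measure_univ, one_mul]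
  have hγdmass : γd Set.univ = lamdag Set.univ := by
    rw [hγd, Measure.map_apply hγdmeas MeasurableSet.univ, Set.preimage_univ,
      ← Set.univ_prod_univ, Measure.prod_prod, measure_univ, one_mul]
  haveI : IsFiniteMeasure γd := by
    constructor; rw [hγdmass]; exact measure_lt_top _ _
  have hcoupling : ∀ t ∈ Sig, Mv t γd = Rop (udag t) := by
    intro t _
    rw [hMv, hRop, hudag, hγd]
    have hpr : HΘ.prod (lamdag.map (fun p => p.1 + t • p.2))
        = (HΘ.prod lamdag).map (Prod.map id (fun p => p.1 + t • p.2)) := by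
      rw [← Measure.map_prod_map _ _ measurable_id (hmove t), Measure.map_id]
    rw [hpr, Measure.map_map (hmv t) hγdmeas,
      Measure.map_map hinner (measurable_id.prodMap (hmove t))]
    congr 1
    funext q
    simp only [Function.comp, Prod.map, id]
    congr 1
    rw [inner_add_right, real_inner_smul_right]
  have hudagmass : ∀ t : ℝ, udag t Set.univ = lamdag Set.univ := by
    intro t
    rw [hudag, Measure.map_apply (hmove t) MeasurableSet.univ, Set.preimage_univ]
  haveI : ∀ t, IsFiniteMeasure (udag t) := by
    intro t; constructor; rw [hudagmass t]; exact measure_lt_top _ _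
  have h1 : γ Set.univ ≤ lamdag Set.univ := by
    have := hopt udag γd (fun t => inferInstance) inferInstance hcoupling
      (fun t _ => rfl)
    rwa [hγdmass] at this
  have h2 : (u t₀) Set.univ = γ Set.univ := by
    have hc := hadm₁ t₀ (hTSig ht₀)
    rw [hMv, hRop] at hc
    have hl : (γ.map (fun q : (Metric.sphere (0 : EuclideanSpace ℝ (Fin d)) 1) × ℝ × ℝ =>
        (q.1, q.2.1 + t₀ * q.2.2))) Set.univ = γ Set.univ := by
      rw [Measure.map_apply (hmv t₀) MeasurableSet.univ, Set.preimage_univ]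
    have hr : ((HΘ.prod (u t₀)).map (fun q =>
        (q.1, (inner ℝ (q.1 : EuclideanSpace ℝ (Fin d)) q.2 : ℝ)))) Set.univ
        = (u t₀) Set.univ := by
      rw [Measure.map_apply hinner MeasurableSet.univ, Set.preimage_univ,
        hprodmass (u t₀) inferInstance]
    rw [← hr, ← hc, hl]
  exact hstatic (u t₀) (hufin t₀) (hadm₂ t₀ ht₀)
    (by rw [h2, hudagmass t₀]; exact h1)
end

section
/- (Domain of projected phase space is a parallelogram) Let T > 0, Ω = [0,1]^d, and Λ̃ = {(x,v) ∈ ℝ^d × ℝ^d : x + t v ∈ Ω for all t ∈ [−T, T] restricted to t ∈ {−T, T}} = {(x,v) : x ± T v ∈ [0,1]^d}. For θ ∈ S^{d-1} set s₊ = Σ_{j: θ_j > 0} θ_j and s₋ = Σ_{j: θ_j < 0} θ_j. Then the image {(θ·x, θ·v) : (x,v) ∈ Λ̃} ⊆ ℝ² equals the convex hull (a parallelogram) of the four points (s₋, 0), (s₊, 0), ((s₊+s₋)/2, (s₊−s₋)/(2T)), ((s₊+s₋)/2, (s₋−s₊)/(2T)). -/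
open Set Finset

/-- The projected phase-space domain is a parallelogram: for `Ω = [0,1]^d`,
`Λ̃ = {(x,v) : x ± T v ∈ [0,1]^d}` and a unit direction `θ`, the image of `Λ̃` under
`(x,v) ↦ (θ·x, θ·v)` is the convex hull of the four stated vertices. -/
theorem stmt_19 {d : ℕ} (T : ℝ) (hT : 0 < T)
    (θ : EuclideanSpace ℝ (Fin d)) (hθ : ‖θ‖ = 1)
    (sp sm : ℝ)
    (hsp : sp = ∑ j ∈ Finset.univ.filter (fun j : Fin d => 0 < θ j), θ j)
    (hsm : sm = ∑ j ∈ Finset.univ.filter (fun j : Fin d => θ j < 0), θ j) :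
    (fun p : EuclideanSpace ℝ (Fin d) × EuclideanSpace ℝ (Fin d) =>
        ((inner ℝ θ p.1 : ℝ), (inner ℝ θ p.2 : ℝ))) ''
      {p : EuclideanSpace ℝ (Fin d) × EuclideanSpace ℝ (Fin d) |
        ∀ j : Fin d, (p.1 + T • p.2) j ∈ Set.Icc (0 : ℝ) 1
          ∧ (p.1 - T • p.2) j ∈ Set.Icc (0 : ℝ) 1}
      = convexHull ℝ ({(sm, 0), (sp, 0),
          ((sp + sm) / 2, (sp - sm) / (2 * T)),
          ((sp + sm) / 2, (sm - sp) / (2 * T))} : Set (ℝ × ℝ)) := by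
  classical
  have hTne : (T : ℝ) ≠ 0 := ne_of_gt hT
  -- the linear map (α, β) ↦ ((α+β)/2, (α-β)/(2T))
  set L : (ℝ × ℝ) →ₗ[ℝ] (ℝ × ℝ) :=
    { toFun := fun q => ((q.1 + q.2) / 2, (q.1 - q.2) / (2 * T))
      map_add' := by
        intro a b
        simp only [Prod.mk_add_mk, Prod.mk.injEq, Prod.fst_add, Prod.snd_add]
        constructor <;> ring
      map_smul' := by
        intro c a
        simp only [Prod.smul_mk, smul_eq_mul, RingHom.id_apply, Prod.mk.injEq,
          Prod.smul_fst, Prod.smul_snd]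
        constructor <;> ring } with hL
  have hsm0 : sm ≤ 0 := by
    rw [hsm]
    exact Finset.sum_nonpos fun j hj => le_of_lt (Finset.mem_filter.mp hj).2
  have hsp0 : 0 ≤ sp := by
    rw [hsp]
    exact Finset.sum_nonneg fun j hj => le_of_lt (Finset.mem_filter.mp hj).2
  have hsmsp : sm ≤ sp := hsm0.trans hsp0
  have hinner : ∀ x : EuclideanSpace ℝ (Fin d), (inner ℝ θ x : ℝ) = ∑ j, θ j * x j := by
    intro x
    simp [PiLp.inner_apply, RCLike.inner_apply, mul_comm]
  -- bound lemma
  have hbound : ∀ a : EuclideanSpace ℝ (Fin d), (∀ j, a j ∈ Set.Icc (0 : ℝ) 1) →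
      (∑ j, θ j * a j) ∈ Set.Icc sm sp := by
    intro a ha
    constructor
    · rw [hsm, ← Finset.sum_filter_add_sum_filter_not Finset.univ (fun j => θ j < 0)
        (fun j => θ j * a j)]
      have h1 : ∑ j ∈ Finset.univ.filter (fun j : Fin d => θ j < 0), θ j
          ≤ ∑ j ∈ Finset.univ.filter (fun j : Fin d => θ j < 0), θ j * a j := by
        apply Finset.sum_le_sum
        intro j hj
        have hj' := (Finset.mem_filter.mp hj).2
        nlinarith [(ha j).1, (ha j).2]
      have h2 : (0 : ℝ) ≤ ∑ j ∈ Finset.univ.filter (fun j : Fin d => ¬ θ j < 0),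
          θ j * a j := by
        apply Finset.sum_nonneg
        intro j hj
        have hj' := (Finset.mem_filter.mp hj).2
        push_neg at hj'
        exact mul_nonneg hj' (ha j).1
      linarith
    · rw [hsp, ← Finset.sum_filter_add_sum_filter_not Finset.univ (fun j => 0 < θ j)
        (fun j => θ j * a j)]
      have h1 : ∑ j ∈ Finset.univ.filter (fun j : Fin d => 0 < θ j), θ j * a j
          ≤ ∑ j ∈ Finset.univ.filter (fun j : Fin d => 0 < θ j), θ j := by
        apply Finset.sum_le_sum
        intro j hj
        have hj' := (Finset.mem_filter.mp hj).2
        nlinarith [(ha j).1, (ha j).2]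
      have h2 : (∑ j ∈ Finset.univ.filter (fun j : Fin d => ¬ 0 < θ j),
          θ j * a j) ≤ 0 := by
        apply Finset.sum_nonpos
        intro j hj
        have hj' := (Finset.mem_filter.mp hj).2
        push_neg at hj'
        exact mul_nonpos_of_nonpos_of_nonneg hj' (ha j).1
      linarith
  -- existence lemma
  have hexists : ∀ α ∈ Set.Icc sm sp, ∃ a : EuclideanSpace ℝ (Fin d),
      (∀ j, a j ∈ Set.Icc (0 : ℝ) 1) ∧ (∑ j, θ j * a j) = α := by
    intro α hα
    rcases le_or_gt 0 α with h0 | h0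
    · rcases eq_or_lt_of_le hsp0 with hsp' | hsp'
      · refine ⟨(WithLp.toLp 2 (fun _ => 0) : EuclideanSpace ℝ (Fin d)), fun j => ⟨le_refl 0, zero_le_one⟩, ?_⟩
        simp
        linarith [hα.2]
      · refine ⟨(WithLp.toLp 2 (fun j => if 0 < θ j then α / sp else 0) : EuclideanSpace ℝ (Fin d)), ?_, ?_⟩
        · intro j
          by_cases hj : 0 < θ j <;> simp [hj]
          constructor
          · positivity
          · rw [div_le_one hsp']; exact hα.2
        · have : ∀ j : Fin d, θ j * (if 0 < θ j then α / sp else 0)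
              = if 0 < θ j then θ j * (α / sp) else 0 := by
            intro j; by_cases hj : 0 < θ j <;> simp [hj]
          simp_rw [this]
          rw [← Finset.sum_filter, ← Finset.sum_mul, ← hsp]
          field_simp
    · have hsm' : sm < 0 := lt_of_le_of_lt hα.1 h0
      refine ⟨(WithLp.toLp 2 (fun j => if θ j < 0 then α / sm else 0) : EuclideanSpace ℝ (Fin d)), ?_, ?_⟩
      · intro j
        by_cases hj : θ j < 0 <;> simp [hj]
        constructor
        · have := div_nonneg (neg_nonneg.2 h0.le) (neg_nonneg.2 hsm'.le)
          rwa [neg_div_neg_eq] at this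
        · rw [div_le_one_of_neg hsm']; exact hα.1
      · have : ∀ j : Fin d, θ j * (if θ j < 0 then α / sm else 0)
            = if θ j < 0 then θ j * (α / sm) else 0 := by
          intro j; by_cases hj : θ j < 0 <;> simp [hj]
        simp_rw [this]
        rw [← Finset.sum_filter, ← Finset.sum_mul, ← hsm]
        field_simp [hsm'.ne]
  -- key: the image equals L '' (square)
  have key : (fun p : EuclideanSpace ℝ (Fin d) × EuclideanSpace ℝ (Fin d) =>
        ((inner ℝ θ p.1 : ℝ), (inner ℝ θ p.2 : ℝ))) ''
      {p : EuclideanSpace ℝ (Fin d) × EuclideanSpace ℝ (Fin d) |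
        ∀ j : Fin d, (p.1 + T • p.2) j ∈ Set.Icc (0 : ℝ) 1
          ∧ (p.1 - T • p.2) j ∈ Set.Icc (0 : ℝ) 1}
      = L '' (Set.Icc sm sp ×ˢ Set.Icc sm sp) := by
    apply Set.Subset.antisymm
    · rintro _ ⟨p, hp, rfl⟩
      set α := ∑ j, θ j * (p.1 + T • p.2) j with hα
      set β := ∑ j, θ j * (p.1 - T • p.2) j with hβ
      have hαm : α ∈ Set.Icc sm sp := hbound _ fun j => (hp j).1
      have hβm : β ∈ Set.Icc sm sp := hbound _ fun j => (hp j).2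
      refine ⟨(α, β), Set.mk_mem_prod hαm hβm, ?_⟩
      have hsum1 : α + β = 2 * ∑ j, θ j * p.1 j := by
        rw [hα, hβ, ← Finset.sum_add_distrib, Finset.mul_sum]
        apply Finset.sum_congr rfl
        intro j _
        simp only [PiLp.add_apply, PiLp.sub_apply, PiLp.smul_apply, smul_eq_mul]
        ring
      have hsum2 : α - β = 2 * T * ∑ j, θ j * p.2 j := by
        rw [hα, hβ, ← Finset.sum_sub_distrib, Finset.mul_sum]
        apply Finset.sum_congr rfl
        intro j _
        simp only [PiLp.add_apply, PiLp.sub_apply, PiLp.smul_apply, smul_eq_mul]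
        ring
      have : L (α, β) = ((α + β) / 2, (α - β) / (2 * T)) := rfl
      rw [this]
      show ((α + β) / 2, (α - β) / (2 * T)) = ((inner ℝ θ p.1 : ℝ), (inner ℝ θ p.2 : ℝ))
      rw [hinner p.1, hinner p.2, Prod.ext_iff]
      constructor
      · simp only; rw [hsum1]; ring
      · simp only; rw [hsum2]; field_simp
    · rintro _ ⟨⟨α, β⟩, ⟨hαm, hβm⟩, rfl⟩
      obtain ⟨a, ha, hav⟩ := hexists α hαm
      obtain ⟨b, hb, hbv⟩ := hexists β hβm
      set x : EuclideanSpace ℝ (Fin d) := (2⁻¹ : ℝ) • (a + b) with hx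
      set v : EuclideanSpace ℝ (Fin d) := ((2 * T)⁻¹ : ℝ) • (a - b) with hv
      have hxa : ∀ j, (x + T • v) j = a j := by
        intro j
        simp only [hx, hv, PiLp.add_apply, PiLp.sub_apply, PiLp.smul_apply, smul_eq_mul]
        field_simp
        ring
      have hxb : ∀ j, (x - T • v) j = b j := by
        intro j
        simp only [hx, hv, PiLp.add_apply, PiLp.sub_apply, PiLp.smul_apply, smul_eq_mul]
        field_simp
        ring
      refine ⟨(x, v), ?_, ?_⟩
      · intro j
        exact ⟨(hxa j) ▸ ha j, (hxb j) ▸ hb j⟩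
      · have hx1 : (inner ℝ θ x : ℝ) = (α + β) / 2 := by
          rw [hinner, ← hav, ← hbv, ← Finset.sum_add_distrib]
          rw [Finset.sum_div]
          apply Finset.sum_congr rfl
          intro j _
          simp only [hx, PiLp.add_apply, PiLp.smul_apply, smul_eq_mul]
          ring
        have hx2 : (inner ℝ θ v : ℝ) = (α - β) / (2 * T) := by
          rw [hinner, ← hav, ← hbv, ← Finset.sum_sub_distrib]
          rw [Finset.sum_div]
          apply Finset.sum_congr rfl
          intro j _
          simp only [hv, PiLp.sub_apply, PiLp.smul_apply, smul_eq_mul]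
          field_simp
        show ((inner ℝ θ x : ℝ), (inner ℝ θ v : ℝ)) = L (α, β)
        rw [hx1, hx2]
        rfl
  rw [key]
  -- now the convex-geometry part
  have hsq : Set.Icc sm sp ×ˢ Set.Icc sm sp
      = convexHull ℝ (({sm, sp} : Set ℝ) ×ˢ ({sm, sp} : Set ℝ)) := by
    rw [convexHull_prod, convexHull_pair, segment_eq_Icc hsmsp]
  rw [hsq, L.image_convexHull]
  congr 1
  have hset : (({sm, sp} : Set ℝ) ×ˢ ({sm, sp} : Set ℝ))
      = {(sm, sm), (sm, sp), (sp, sm), (sp, sp)} := by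
    ext ⟨u, w⟩
    simp [Set.mem_prod, Prod.ext_iff]
    tauto
  rw [hset]
  simp only [Set.image_insert_eq, Set.image_singleton]
  have e1 : L (sm, sm) = (sm, 0) := by
    simp only [hL, LinearMap.coe_mk, AddHom.coe_mk]; rw [Prod.ext_iff]
    constructor <;> simp <;> ring
  have e2 : L (sp, sp) = (sp, 0) := by
    simp only [hL, LinearMap.coe_mk, AddHom.coe_mk]; rw [Prod.ext_iff]
    constructor <;> simp <;> ring
  have e3 : L (sp, sm) = ((sp + sm) / 2, (sp - sm) / (2 * T)) := rfl
  have e4 : L (sm, sp) = ((sp + sm) / 2, (sm - sp) / (2 * T)) := by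
    simp only [hL, LinearMap.coe_mk, AddHom.coe_mk]; rw [Prod.ext_iff]
    constructor <;> simp <;> ring
  rw [e1, e2, e3, e4]
  ext q
  simp only [Set.mem_insert_iff, Set.mem_singleton_iff]
  tauto
end
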